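/- arXiv:1210.6960 — 6 statements merged into one kernel-verified Lean document; each statement's English description precedes it below -/
import Mathlib

section
/- Let G be a topological group whose underlying topological space is connected and has only finitely many irreducible components. Then the underlying topological space of G is irreducible. -/
open Set

lemma homeomorph_image_mem_irreducibleComponents {X Y : Type*} [TopologicalSpace X]
    [TopologicalSpace Y] (e : X ≃ₜ Y) {s : Set X} (h : s ∈ irreducibleComponents X) :
    e '' s ∈ irreducibleComponents Y := by
  refine ⟨h.1.image e e.continuous.continuousOn, fun t ht hsub => ?_⟩
  have h1 : s ⊆ e.symm '' t := by
    intro x hx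
    exact ⟨e x, hsub ⟨x, hx, rfl⟩, e.symm_apply_apply x⟩
  have h2 : e.symm '' t ⊆ s :=
    h.2 (ht.image e.symm e.symm.continuous.continuousOn) h1
  intro y hy
  have : e.symm y ∈ s := h2 ⟨y, hy, rfl⟩
  exact ⟨e.symm y, this, e.apply_symm_apply y⟩

/-- A topological group whose underlying space is connected and has only finitely many
irreducible components is irreducible. -/
theorem irreducibleSpace_of_connected_topological_group (G : Type*) [Group G]
    [TopologicalSpace G] [IsTopologicalGroup G] [ConnectedSpace G]
    (hfin : (irreducibleComponents G).Finite) :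
    IrreducibleSpace G := by
  classical
  -- every component has a point not in any other component
  have key : ∀ Z ∈ irreducibleComponents G, ∃ u ∈ Z,
      ∀ Z' ∈ irreducibleComponents G, u ∈ Z' → Z' = Z := by
    intro Z hZ
    by_contra hcon
    push_neg at hcon
    have hsub : Z ⊆ ⋃₀ ((hfin.toFinset.erase Z : Finset (Set G)) : Set (Set G)) := by
      intro u hu
      obtain ⟨Z', hZ', huZ', hne⟩ := hcon u hu
      exact ⟨Z', Finset.mem_coe.mpr (Finset.mem_erase.mpr ⟨hne, hfin.mem_toFinset.2 hZ'⟩), huZ'⟩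
    obtain ⟨Z', hZ'mem, hZZ'⟩ := (isIrreducible_iff_sUnion_isClosed.mp hZ.1)
      (hfin.toFinset.erase Z)
      (fun z hz => isClosed_of_mem_irreducibleComponents z
        (hfin.mem_toFinset.mp (Finset.mem_of_mem_erase hz))) hsub
    rw [Finset.mem_erase, hfin.mem_toFinset] at hZ'mem
    exact hZ'mem.1 (le_antisymm (hZ.2 hZ'mem.2.1 hZZ') hZZ')
  -- pairwise disjoint
  have hdisj : ∀ Z₁ ∈ irreducibleComponents G, ∀ Z₂ ∈ irreducibleComponents G,
      Z₁ ≠ Z₂ → Disjoint Z₁ Z₂ := by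
    intro Z₁ hZ₁ Z₂ hZ₂ hne
    rw [Set.disjoint_left]
    intro x hx1 hx2
    obtain ⟨u, huZ, hu⟩ := key Z₁ hZ₁
    set e := Homeomorph.mulLeft (u * x⁻¹)
    have hex : e x = u := by simp [e, mul_assoc]
    have h1 : e '' Z₁ = Z₁ :=
      hu _ (homeomorph_image_mem_irreducibleComponents e hZ₁) ⟨x, hx1, hex⟩
    have h2 : e '' Z₂ = Z₁ :=
      hu _ (homeomorph_image_mem_irreducibleComponents e hZ₂) ⟨x, hx2, hex⟩
    exact hne (e.injective.image_injective (h1.trans h2.symm))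
  -- the component of some point is clopen
  obtain ⟨x⟩ := (inferInstance : Nonempty G)
  set Z := irreducibleComponent x with hZdef
  have hZmem : Z ∈ irreducibleComponents G := irreducibleComponent_mem_irreducibleComponents x
  have hZcompl : Zᶜ = ⋃ Z' ∈ irreducibleComponents G \ {Z}, Z' := by
    ext y
    simp only [mem_compl_iff, mem_iUnion, mem_diff, mem_singleton_iff]
    constructor
    · intro hy
      refine ⟨irreducibleComponent y, ⟨irreducibleComponent_mem_irreducibleComponents y, ?_⟩,
        mem_irreducibleComponent⟩
      intro h; rw [← h] at hy; exact hy mem_irreducibleComponent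
    · rintro ⟨Z', ⟨hZ', hne⟩, hyZ'⟩
      exact fun hyZ => (Set.disjoint_left.mp (hdisj Z' hZ' Z hZmem hne) hyZ') hyZ
  have hopen : IsOpen Z := by
    rw [← isClosed_compl_iff, hZcompl]
    exact (hfin.diff (t := {Z})).isClosed_biUnion
      (fun Z' hZ' => isClosed_of_mem_irreducibleComponents Z' hZ'.1)
  have hclopen : IsClopen Z := ⟨isClosed_of_mem_irreducibleComponents Z hZmem, hopen⟩
  have huniv : Z = univ :=
    (isClopen_iff.mp hclopen).resolve_left (Nonempty.ne_empty ⟨x, mem_irreducibleComponent⟩)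
  have hirr : IsIrreducible (univ : Set G) := huniv ▸ hZmem.1
  haveI : PreirreducibleSpace G := ⟨hirr.2⟩
  exact ⟨inferInstance⟩
end

section
/- Let G be a topological group whose underlying topological space has only finitely many irreducible components. Then exactly one irreducible component Z of G contains the identity element; Z is a closed normal subgroup of finite index in G; and the left cosets of Z are exactly the irreducible components of G, and are also exactly the connected components of G. -/
open scoped Pointwise

/-- The image of an irreducible component under a self-homeomorphism is an
irreducible component. -/
theorem homeo_image_mem_irreducibleComponents {X : Type*} [TopologicalSpace X]
    (e : X ≃ₜ X) {W : Set X} (hW : W ∈ irreducibleComponents X) :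
    e '' W ∈ irreducibleComponents X := by
  constructor
  · exact hW.1.image e e.continuous.continuousOn
  · intro t ht hsub
    have h1 : W ⊆ e.symm '' t := fun x hx =>
      ⟨e x, hsub ⟨x, hx, rfl⟩, e.symm_apply_apply x⟩
    have h2 : e.symm '' t ⊆ W := hW.2 (ht.image e.symm e.symm.continuous.continuousOn) h1
    intro y hy
    exact ⟨e.symm y, h2 ⟨y, hy, rfl⟩, e.apply_symm_apply y⟩

/-- For a topological group `G` with only finitely many irreducible components: exactly
one irreducible component `Z` contains the identity; `Z` is a closed normal subgroup of
finite index; and the left cosets of `Z` are exactly the irreducible components of `G`,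
and also exactly the connected components of `G`. -/
theorem identity_component_of_topological_group (G : Type*) [Group G]
    [TopologicalSpace G] [IsTopologicalGroup G]
    (hfin : (irreducibleComponents G).Finite) :
    (∃! W : Set G, W ∈ irreducibleComponents G ∧ (1 : G) ∈ W) ∧
    ∃ Z : Subgroup G,
      (Z : Set G) ∈ irreducibleComponents G ∧ (1 : G) ∈ (Z : Set G) ∧
      Z.Normal ∧ IsClosed (Z : Set G) ∧ Z.FiniteIndex ∧
      (∀ W : Set G, W ∈ irreducibleComponents G ↔ ∃ g : G, W = g • (Z : Set G)) ∧
      (∀ W : Set G, (∃ g : G, W = g • (Z : Set G)) ↔ ∃ x : G, W = connectedComponent x) := by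
  -- translation preserves irreducible components
  have hsmul : ∀ (g : G) {W : Set G}, W ∈ irreducibleComponents G →
      g • W ∈ irreducibleComponents G := by
    intro g W hW
    have := homeo_image_mem_irreducibleComponents (Homeomorph.mulLeft g) hW
    simpa [← Set.image_smul] using this
  -- there is a point lying in exactly one irreducible component
  have hpt : ∃ (x : G) (W₀ : Set G), W₀ ∈ irreducibleComponents G ∧
      (∀ V ∈ irreducibleComponents G, x ∈ V → V = W₀) := by
    set W₀ := irreducibleComponent (1 : G) with hW₀def
    have hW₀ := irreducibleComponent_mem_irreducibleComponents (1 : G)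
    by_contra h
    push_neg at h
    have hcover : W₀ ⊆ ⋃₀ (irreducibleComponents G \ {W₀}) := by
      intro x hx
      obtain ⟨V, hV, hxV, hne⟩ := h x W₀ hW₀
      exact ⟨V, ⟨hV, hne⟩, hxV⟩
    have hfin' : (irreducibleComponents G \ {W₀}).Finite := hfin.subset Set.diff_subset
    obtain ⟨V, hVmem, hsub⟩ :=
      (isIrreducible_iff_sUnion_isClosed.mp hW₀.1) hfin'.toFinset
        (fun z hz => isClosed_of_mem_irreducibleComponents z
          ((Set.Finite.mem_toFinset hfin' |>.mp hz).1))
        (by rwa [hfin'.coe_toFinset])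
    rw [Set.Finite.mem_toFinset] at hVmem
    exact hVmem.2 ((hW₀.2 hVmem.1.1 hsub).antisymm hsub ▸ rfl)
  -- distinct irreducible components are disjoint
  have hdisj : ∀ V ∈ irreducibleComponents G, ∀ W ∈ irreducibleComponents G,
      ∀ y : G, y ∈ V → y ∈ W → V = W := by
    obtain ⟨x, W₀, hW₀, hx⟩ := hpt
    intro V hV W hW y hyV hyW
    set g := x * y⁻¹ with hg
    have hxg : ∀ U : Set G, y ∈ U → x ∈ g • U := fun U hyU =>
      ⟨y, hyU, by simp [hg, smul_eq_mul, inv_mul_cancel_right]⟩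
    have h1 : g • V = W₀ := hx _ (hsmul g hV) (hxg V hyV)
    have h2 : g • W = W₀ := hx _ (hsmul g hW) (hxg W hyW)
    have := h1.trans h2.symm
    have := congrArg (fun s => g⁻¹ • s) this
    simpa [inv_smul_smul] using this
  set Z0 := irreducibleComponent (1 : G) with hZ0def
  have hZ0 := irreducibleComponent_mem_irreducibleComponents (1 : G)
  have h1Z0 : (1 : G) ∈ Z0 := mem_irreducibleComponent
  -- every component containing a point p equals p • Z0
  have hcosetOf : ∀ (p : G) (W : Set G), W ∈ irreducibleComponents G → p ∈ W →
      W = p • Z0 := by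
    intro p W hW hp
    have hpZ : p ∈ p • Z0 := ⟨1, h1Z0, by simp [smul_eq_mul]⟩
    exact hdisj W hW _ (hsmul p hZ0) p hp hpZ
  -- Z0 is a subgroup
  have hmul : ∀ a b : G, a ∈ Z0 → b ∈ Z0 → a * b ∈ Z0 := by
    intro a b ha hb
    have : Z0 = a • Z0 := hcosetOf a Z0 hZ0 ha
    rw [this]
    exact ⟨b, hb, rfl⟩
  have hinv : ∀ a : G, a ∈ Z0 → a⁻¹ ∈ Z0 := by
    intro a ha
    have h1 : (1 : G) ∈ a⁻¹ • Z0 := ⟨a, ha, by simp [smul_eq_mul]⟩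
    have : a⁻¹ • Z0 = Z0 := hdisj _ (hsmul a⁻¹ hZ0) Z0 hZ0 1 h1 h1Z0
    rw [← this]
    exact ⟨1, h1Z0, by simp [smul_eq_mul]⟩
  refine ⟨⟨Z0, ⟨hZ0, h1Z0⟩, fun W ⟨hW, h1W⟩ => hdisj W hW Z0 hZ0 1 h1W h1Z0⟩, ?_⟩
  let Z : Subgroup G :=
    { carrier := Z0
      one_mem' := h1Z0
      mul_mem' := fun ha hb => hmul _ _ ha hb
      inv_mem' := fun ha => hinv _ ha }
  refine ⟨Z, hZ0, h1Z0, ?_, ?_, ?_, ?_, ?_⟩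
  · -- Normal
    refine ⟨fun n hn g => ?_⟩
    set e := (Homeomorph.mulLeft g).trans (Homeomorph.mulRight g⁻¹) with he
    have hmem : e '' Z0 ∈ irreducibleComponents G :=
      homeo_image_mem_irreducibleComponents e hZ0
    have h1e : (1 : G) ∈ e '' Z0 := ⟨1, h1Z0, by simp [he]⟩
    have : e '' Z0 = Z0 := hdisj _ hmem Z0 hZ0 1 h1e h1Z0
    have : e n ∈ Z0 := this ▸ ⟨n, hn, rfl⟩
    simp [he] at this
    exact this
  · exact isClosed_of_mem_irreducibleComponents _ hZ0
  · -- finite index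
    have : Finite ↥(irreducibleComponents G) := hfin.to_subtype
    have hinj : Function.Injective
        (fun q : G ⧸ Z => Quotient.liftOn' q
          (fun g => (⟨g • Z0, hsmul g hZ0⟩ : ↥(irreducibleComponents G)))
          (by
            intro a b hab
            have hab' : a⁻¹ * b ∈ Z := QuotientGroup.leftRel_apply.mp hab
            exact Subtype.ext ((leftCoset_eq_iff Z).mpr hab'))) := by
      intro q q'
      induction q using Quotient.inductionOn'
      induction q' using Quotient.inductionOn'
      intro h
      have : _ • _ = _ • _ := congrArg Subtype.val h
      exact Quotient.sound' (QuotientGroup.leftRel_apply.mpr ((leftCoset_eq_iff Z).mp this))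
    haveI : Finite (G ⧸ Z) := Finite.of_injective _ hinj
    exact Subgroup.finiteIndex_of_finite_quotient
  · -- cosets = irreducible components
    intro W
    constructor
    · intro hW
      obtain ⟨p, hp⟩ := hW.1.1
      exact ⟨p, hcosetOf p W hW hp⟩
    · rintro ⟨g, rfl⟩
      exact hsmul g hZ0
  · -- cosets = connected components
    have hopen : ∀ W ∈ irreducibleComponents G, IsOpen W := by
      intro W hW
      have hcompl : Wᶜ = ⋃₀ (irreducibleComponents G \ {W}) := by
        ext x
        constructor
        · intro hx
          refine ⟨irreducibleComponent x, ⟨irreducibleComponent_mem_irreducibleComponents x,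
            fun h => hx (h ▸ mem_irreducibleComponent)⟩, mem_irreducibleComponent⟩
        · rintro ⟨V, ⟨hV, hne⟩, hxV⟩ hxW
          exact hne (hdisj V hV W hW x hxV hxW)
      have hfin' : (irreducibleComponents G \ {W}).Finite := hfin.subset Set.diff_subset
      have : IsClosed Wᶜ := by
        rw [hcompl, Set.sUnion_eq_biUnion]
        exact hfin'.isClosed_biUnion fun V hV =>
          isClosed_of_mem_irreducibleComponents V hV.1
      rw [← isClosed_compl_iff]
      exact this
    have hconn : ∀ W ∈ irreducibleComponents G, ∀ x ∈ W, W = connectedComponent x := by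
      intro W hW x hx
      refine Set.Subset.antisymm (hW.1.2.isPreconnected.subset_connectedComponent hx) ?_
      exact IsClopen.connectedComponent_subset
        ⟨isClosed_of_mem_irreducibleComponents W hW, hopen W hW⟩ hx
    intro W
    constructor
    · rintro ⟨g, rfl⟩
      have hg : g ∈ g • Z0 := ⟨1, h1Z0, by simp [smul_eq_mul]⟩
      exact ⟨g, hconn _ (hsmul g hZ0) g hg⟩
    · rintro ⟨x, rfl⟩
      have hV := irreducibleComponent_mem_irreducibleComponents x
      have heq : irreducibleComponent x = connectedComponent x :=
        hconn _ hV x mem_irreducibleComponent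
      refine ⟨x, ?_⟩
      rw [← heq]
      exact hcosetOf x _ hV mem_irreducibleComponent
end

section
/- Let k be an algebraically closed field and let X be an integral scheme of finite type over k. Then no point of the underlying topological space of X is an attractive point of that space. -/
open AlgebraicGeometry

/-- A point `p` of a topological space `S` is an attractive point of `S` if `S` contains
an infinite proper closed subset and `p` belongs to every infinite closed subset of `S`. -/
def IsAttractivePoint (S : Type*) [TopologicalSpace S] (p : S) : Prop :=
  (∃ F : Set S, IsClosed F ∧ F.Infinite ∧ F ≠ Set.univ) ∧
  ∀ F : Set S, IsClosed F → F.Infinite → p ∈ F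

open CategoryTheory

lemma isArtinian_of_pow_smul_eq_bot {S : Type*} [CommRing S] [IsNoetherianRing S]
    (n : Ideal S) (hn : n.IsMaximal) :
    ∀ (K : ℕ) (T : Type*) [AddCommGroup T] [Module S T] [Module.Finite S T],
      n ^ K • (⊤ : Submodule S T) = ⊥ → IsArtinian S T := by
  intro K
  induction K with
  | zero =>
    intro T _ _ _ h
    rw [pow_zero, Ideal.one_eq_top, Submodule.top_smul] at h
    have : Subsingleton T := by
      constructor
      intro a b
      have ha : a ∈ (⊥ : Submodule S T) := h ▸ Submodule.mem_top
      have hb : b ∈ (⊥ : Submodule S T) := h ▸ Submodule.mem_top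
      rw [Submodule.mem_bot] at ha hb; rw [ha, hb]
    have : Finite T := Finite.of_subsingleton
    exact isArtinian_of_finite
  | succ K ih =>
    intro T _ _ _ h
    haveI : IsNoetherian S T := isNoetherian_of_isNoetherianRing_of_finite S T
    have hNfg : (n • ⊤ : Submodule S T).FG := IsNoetherian.noetherian _
    haveI : Module.Finite S (n • ⊤ : Submodule S T) := (Module.Finite.iff_fg).mpr hNfg
    have hbot : n ^ K • ((n • ⊤ : Submodule S T)) = (⊥ : Submodule S T) := by
      rw [← Submodule.smul_assoc, smul_eq_mul, ← pow_succ]; exact h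
    have hNtor : n ^ K • (⊤ : Submodule S (n • ⊤ : Submodule S T)) = ⊥ := by
      rw [eq_bot_iff]
      intro x hx
      have hmem : (x : T) ∈ Submodule.map (n • ⊤ : Submodule S T).subtype (n ^ K • ⊤) :=
        ⟨x, hx, rfl⟩
      rw [Submodule.map_smul'', Submodule.map_subtype_top, hbot, Submodule.mem_bot] at hmem
      exact Submodule.mem_bot (R := S) .. |>.mpr (by exact_mod_cast hmem)
    haveI hArtN : IsArtinian S (n • ⊤ : Submodule S T) := ih _ hNtor
    haveI : IsScalarTower S (S ⧸ n) (T ⧸ (n • ⊤ : Submodule S T)) := by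
      apply IsScalarTower.of_algebraMap_smul
      intro r x
      induction x using Quotient.inductionOn' with
      | h m =>
        show (Ideal.Quotient.mk n r) • Submodule.Quotient.mk m = _
        rw [Module.Quotient.mk_smul_mk]
        exact (Submodule.Quotient.mk_smul _ r m).symm
    haveI : Module.Finite (S ⧸ n) (T ⧸ (n • ⊤ : Submodule S T)) :=
      Module.Finite.of_restrictScalars_finite S (S ⧸ n) _
    haveI : IsArtinianRing (S ⧸ n) := by
      letI : Field (S ⧸ n) := Ideal.Quotient.field n
      exact inferInstance
    haveI hq : IsArtinian (S ⧸ n) (T ⧸ (n • ⊤ : Submodule S T)) := isArtinian_of_fg_of_artinian'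
    haveI hArtQ : IsArtinian S (T ⧸ (n • ⊤ : Submodule S T)) := by
      let res : Submodule S (T ⧸ (n • ⊤ : Submodule S T)) →
          Submodule (S ⧸ n) (T ⧸ (n • ⊤ : Submodule S T)) := fun W =>
        { carrier := W
          add_mem' := fun ha hb => W.add_mem ha hb
          zero_mem' := W.zero_mem
          smul_mem' := by
            intro c x hx
            induction c using Quotient.inductionOn' with
            | h s =>
              have hc : (Quotient.mk'' s : S ⧸ n) = algebraMap S (S ⧸ n) s := rfl
              rw [hc, algebraMap_smul]
              exact W.smul_mem s hx }
      have hres : StrictMono res := by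
        intro W1 W2 h
        refine lt_of_le_not_ge (fun x hx => h.le hx) (fun hc => h.not_ge (fun x hx => hc hx))
      exact hres.wellFoundedLT
    exact isArtinian_of_range_eq_ker (n • ⊤ : Submodule S T).subtype (n • ⊤ : Submodule S T).mkQ
      (by rw [Submodule.range_subtype, Submodule.ker_mkQ])

open IsLocalRing in
lemma kpit_local {R : Type*} [CommRing R] [IsNoetherianRing R] [IsLocalRing R] [IsDomain R]
    (f : R) (hf : f ∈ maximalIdeal R)
    (hmin : ∀ q : Ideal R, q.IsPrime → f ∈ q → q = maximalIdeal R)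
    (Q : Ideal R) (hQ : Q.IsPrime) (hQm : Q < maximalIdeal R) : Q = ⊥ := by
  have hfQ : f ∉ Q := fun h => hQm.ne (hmin Q hQ h)
  -- the radical of (f) is m
  have hrad : (Ideal.span {f}).radical = maximalIdeal R := by
    rw [Ideal.radical_eq_sInf]
    apply le_antisymm
    · exact sInf_le ⟨(Ideal.span_singleton_le_iff_mem _).mpr hf, inferInstance⟩
    · refine le_sInf ?_
      rintro J ⟨hJ1, hJ2⟩
      exact (hmin J hJ2 (hJ1 (Ideal.mem_span_singleton_self f))).ge
  obtain ⟨K, hKne, hK⟩ : ∃ K, K ≠ 0 ∧ maximalIdeal R ^ K ≤ Ideal.span {f} := by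
    obtain ⟨K, hK⟩ := Ideal.exists_radical_pow_le_of_fg (Ideal.span {f})
      (hrad ▸ IsNoetherian.noetherian _)
    rw [hrad] at hK
    exact ⟨K + 1, by omega, le_trans (Ideal.pow_le_pow_right (by omega)) hK⟩
  -- R ⧸ m^K is an Artinian ring
  set mK : Ideal R := maximalIdeal R ^ K with hmK
  set S := R ⧸ mK with hS
  set n : Ideal S := (maximalIdeal R).map (Ideal.Quotient.mk mK) with hn
  have hnmax : n.IsMaximal := by
    rw [Ideal.Quotient.maximal_ideal_iff_isField_quotient]
    have e1 : (S ⧸ n) ≃+* R ⧸ (mK ⊔ maximalIdeal R) := DoubleQuot.quotQuotEquivQuotSup mK _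
    have e2 : mK ⊔ maximalIdeal R = maximalIdeal R := sup_eq_right.mpr
      (hmK ▸ Ideal.pow_le_self hKne)
    rw [e2] at e1
    have : IsField (R ⧸ maximalIdeal R) :=
      (Ideal.Quotient.maximal_ideal_iff_isField_quotient _).mp inferInstance
    exact MulEquiv.isField this e1.toMulEquiv
  have hnK : n ^ K • (⊤ : Submodule S S) = ⊥ := by
    rw [smul_eq_mul, Ideal.mul_top, hn, ← Ideal.map_pow, ← hmK, Ideal.map_quotient_self]
  haveI hart : IsArtinianRing S := isArtinian_of_pow_smul_eq_bot n hnmax K S hnK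
  -- symbolic powers
  set Rq := Localization.AtPrime Q with hRq
  set algq := algebraMap R Rq with halgq
  set I : ℕ → Ideal R := fun i => ((Q ^ i).map algq).comap algq with hI
  have hImono : ∀ i j, i ≤ j → I j ≤ I i := fun i j hij =>
    Ideal.comap_mono (Ideal.map_mono (Ideal.pow_le_pow_right hij))
  set J : ℕ → Ideal R := fun i => I i ⊔ Ideal.span {f} with hJ
  have hJmono : ∀ i j, i ≤ j → J j ≤ J i := fun i j hij =>
    sup_le_sup_right (hImono i j hij) _
  have hmKJ : ∀ i, mK ≤ J i := fun i => le_trans hK le_sup_right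
  -- stabilization via Artinian quotient
  obtain ⟨N, hN⟩ := IsArtinian.monotone_stabilizes (R := S) (M := S)
    ⟨fun i => OrderDual.toDual ((J i).map (Ideal.Quotient.mk mK)),
     fun i j hij => Ideal.map_mono (hJmono i j hij)⟩
  have hJN : J N = J (N + 1) := by
    have h1 : (J N).map (Ideal.Quotient.mk mK) = (J (N+1)).map (Ideal.Quotient.mk mK) := by
      exact hN (N+1) (by omega)
    have h2 : ∀ i, ((J i).map (Ideal.Quotient.mk mK)).comap (Ideal.Quotient.mk mK) = J i := by
      intro i
      rw [Ideal.comap_map_of_surjective _ Ideal.Quotient.mk_surjective,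
        ← RingHom.ker_eq_comap_bot, Ideal.mk_ker]
      exact sup_eq_left.mpr (hmKJ i)
    rw [← h2 N, ← h2 (N+1), h1]
  -- I N = I (N+1) via Nakayama
  have hsat : I N = I (N + 1) := by
    refine le_antisymm ?_ (hImono N (N+1) (by omega))
    set π := Submodule.mkQ (I (N+1) : Submodule R R) with hπ
    have hbot : Submodule.map π (I N : Submodule R R) = ⊥ := by
      refine Submodule.eq_bot_of_le_smul_of_le_jacobson_bot (Ideal.span {f}) _
        (Submodule.FG.map _ (IsNoetherian.noetherian _)) ?_ ?_
      · rintro y ⟨x, hx, rfl⟩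
        have hxJ : x ∈ I (N+1) ⊔ Ideal.span {f} := by
          have : x ∈ J (N+1) := by rw [← hJN]; exact Submodule.mem_sup_left hx
          rwa [hJ] at this
        obtain ⟨u, hu, v, hv, rfl⟩ := Submodule.mem_sup.mp hxJ
        obtain ⟨a, rfl⟩ := Ideal.mem_span_singleton'.mp hv
        have haI : a ∈ I N := by
          have haf : a * f ∈ I N := by
            have : a * f = (u + a * f) - u := by ring
            rw [this]
            exact Submodule.sub_mem _ hx (hImono N (N+1) (by omega) hu)
          have hufQ : IsUnit (algq f) := IsLocalization.map_units Rq (⟨f, hfQ⟩ : Q.primeCompl)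
          have : algq a * algq f ∈ (Q ^ N).map algq := by
            rw [← map_mul]; exact haf
          rw [mul_comm] at this
          exact (Ideal.unit_mul_mem_iff_mem _ hufQ).mp this
        have : π (u + a * f) = f • π a := by
          have h0 : π u = 0 := by
            rw [hπ, Submodule.mkQ_apply, Submodule.Quotient.mk_eq_zero]; exact hu
          rw [map_add, h0, zero_add]
          show π (a * f) = f • π a
          rw [← map_smul]
          congr 1
          rw [smul_eq_mul, mul_comm]
        rw [this]
        exact Submodule.smul_mem_smul (Ideal.mem_span_singleton_self f) ⟨a, haI, rfl⟩
      · rw [IsLocalRing.jacobson_eq_maximalIdeal ⊥ bot_ne_top]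
        rwa [Ideal.span_singleton_le_iff_mem]
    intro x hx
    have : π x ∈ Submodule.map π (I N : Submodule R R) := ⟨x, hx, rfl⟩
    rw [hbot, Submodule.mem_bot] at this
    rwa [hπ, Submodule.mkQ_apply, Submodule.Quotient.mk_eq_zero] at this
  -- transfer to the localization at Q and apply Nakayama again
  have hmap : (Q.map algq) ^ N = (Q.map algq) ^ (N + 1) := by
    have h1 : ∀ i, (I i).map algq = (Q ^ i).map algq := fun i =>
      IsLocalization.map_comap Q.primeCompl Rq _
    rw [← Ideal.map_pow, ← Ideal.map_pow, ← h1 N, ← h1 (N+1), hsat]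
  have hqbot : (Q.map algq) ^ N = ⊥ := by
    haveI : IsNoetherianRing Rq := IsLocalization.isNoetherianRing Q.primeCompl Rq ‹_›
    refine Submodule.eq_bot_of_le_smul_of_le_jacobson_bot (Q.map algq)
      ((Q.map algq) ^ N : Ideal Rq) (IsNoetherian.noetherian _) ?_ ?_
    · rw [smul_eq_mul, ← pow_succ', ← hmap]
    · rw [IsLocalRing.jacobson_eq_maximalIdeal ⊥ bot_ne_top,
        Localization.AtPrime.map_eq_maximalIdeal]
  -- conclude Q = ⊥
  rw [eq_bot_iff]
  intro x hx
  have h1 : algq x ^ (N + 1) ∈ (Q.map algq) ^ (N + 1) :=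
    Ideal.pow_mem_pow (Ideal.mem_map_of_mem _ hx) _
  have h2 : (Q.map algq) ^ (N + 1) = ⊥ := by
    rw [eq_bot_iff, ← hqbot, pow_succ]
    exact Ideal.mul_le_left
  rw [h2, Submodule.mem_bot] at h1
  have h3 : algq x = 0 := pow_eq_zero_iff (by omega) |>.mp h1
  have hinj : Function.Injective algq := IsLocalization.injective Rq Q.primeCompl_le_nonZeroDivisors
  rw [Submodule.mem_bot]
  exact hinj (by rw [h3, map_zero])

/-- Krull's principal ideal theorem for domains: a maximal ideal which is minimal over a
principal ideal admits no prime strictly between it and `⊥`. -/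
lemma kpit {A : Type*} [CommRing A] [IsNoetherianRing A] [IsDomain A]
    (M : Ideal A) (hM : M.IsMaximal) (f : A) (hfM : M ∈ (Ideal.span {f}).minimalPrimes)
    (Q : Ideal A) (hQ : Q.IsPrime) (hQM : Q < M) : Q = ⊥ := by
  haveI hMp : M.IsPrime := hM.isPrime
  set R := Localization.AtPrime M with hR
  haveI : IsNoetherianRing R := IsLocalization.isNoetherianRing M.primeCompl R ‹_›
  set alg := algebraMap A R with halg
  have hinj : Function.Injective alg := IsLocalization.injective R M.primeCompl_le_nonZeroDivisors
  have hmax : M.map alg = IsLocalRing.maximalIdeal R := Localization.AtPrime.map_eq_maximalIdeal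
  have hfM' : f ∈ M := hfM.1.2 (Ideal.mem_span_singleton_self f)
  have hf1 : alg f ∈ IsLocalRing.maximalIdeal R := hmax ▸ Ideal.mem_map_of_mem _ hfM'
  have hmin : ∀ q : Ideal R, q.IsPrime → alg f ∈ q → q = IsLocalRing.maximalIdeal R := by
    intro q hq hfq
    have hqle : q ≤ IsLocalRing.maximalIdeal R := IsLocalRing.le_maximalIdeal hq.ne_top
    haveI : (q.comap alg).IsPrime := hq.comap alg
    have h1 : q.comap alg ≤ M := by
      have := Ideal.comap_mono (f := alg) hqle
      exact this.trans (IsLocalization.AtPrime.comap_maximalIdeal R M).le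
    have h2 : M ≤ q.comap alg := hfM.2 ⟨‹(q.comap alg).IsPrime›,
      (Ideal.span_singleton_le_iff_mem _).mpr hfq⟩ h1
    have h3 : q.comap alg = M := le_antisymm h1 h2
    rw [← IsLocalization.map_comap M.primeCompl R q]
    exact (congrArg (Ideal.map alg) h3).trans hmax
  have hdisj : Disjoint (M.primeCompl : Set A) (Q : Set A) := by
    rw [Set.disjoint_left]
    intro x hx hxQ
    exact hx (hQM.le hxQ)
  haveI hq' : (Q.map alg).IsPrime :=
    IsLocalization.isPrime_of_isPrime_disjoint M.primeCompl R Q hQ hdisj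
  have hcomap : (Q.map alg).comap alg = Q :=
    IsLocalization.comap_map_of_isPrime_disjoint M.primeCompl R hQ hdisj
  have hlt : Q.map alg < IsLocalRing.maximalIdeal R := by
    refine lt_of_le_of_ne (IsLocalRing.le_maximalIdeal hq'.ne_top) ?_
    intro heq
    apply hQM.ne
    rw [← hcomap, heq]
    exact IsLocalization.AtPrime.comap_maximalIdeal R M
  have hbot : Q.map alg = ⊥ := kpit_local (alg f) hf1 hmin (Q.map alg) hq' hlt
  rw [← hcomap, hbot, eq_bot_iff]
  intro x hx
  rw [Ideal.mem_comap, Submodule.mem_bot] at hx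
  rw [Submodule.mem_bot]
  exact hinj (by rw [hx, map_zero])

/-- In a finitely generated domain over an algebraically closed field containing a chain
`⊥ < Q1 < M` of primes, not every non-maximal prime can be contained in a single prime `P`. -/
lemma core_contradiction {k A : Type*} [Field k] [IsAlgClosed k] [CommRing A] [IsDomain A]
    [Algebra k A] [Algebra.FiniteType k A] (P Q1 M : Ideal A) (hP : P.IsPrime)
    (hQ1 : Q1.IsPrime) (hM : M.IsMaximal) (h1 : ⊥ < Q1) (h2 : Q1 < M)
    (H : ∀ q : Ideal A, q.IsPrime → ¬ q.IsMaximal → q ≤ P) : False := by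
  haveI : IsNoetherianRing A := Algebra.FiniteType.isNoetherianRing k A
  haveI : IsJacobsonRing A := isJacobsonRing_of_finiteType (A := k)
  have hQ1nm : ¬ Q1.IsMaximal := fun h => h2.ne (h.eq_of_le hM.ne_top h2.le)
  set φ := Ideal.Quotient.mk Q1 with hφ
  haveI : Algebra.FiniteType k (A ⧸ Q1) :=
    Algebra.FiniteType.of_surjective (Ideal.Quotient.mkₐ k Q1)
      Ideal.Quotient.mk_surjective
  haveI : IsJacobsonRing (A ⧸ Q1) := isJacobsonRing_of_finiteType (A := k)
  have hφalg : ∀ c : k, φ (algebraMap k A c) = algebraMap k (A ⧸ Q1) c := by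
    intro c
    rw [IsScalarTower.algebraMap_apply k A (A ⧸ Q1)]
    rfl
  -- every element of (A ⧸ Q1) has a residue value in k at every maximal ideal
  have val : ∀ m' : Ideal (A ⧸ Q1), m'.IsMaximal → ∀ a : (A ⧸ Q1), ∃ c : k,
      a - algebraMap k (A ⧸ Q1) c ∈ m' := by
    intro m' hm' a
    haveI := hm'
    haveI := hm'.isPrime
    haveI : Algebra.FiniteType k ((A ⧸ Q1) ⧸ m') :=
      Algebra.FiniteType.of_surjective (Ideal.Quotient.mkₐ k m')
        Ideal.Quotient.mk_surjective
    haveI : Module.Finite k ((A ⧸ Q1) ⧸ m') := by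
      letI : Field ((A ⧸ Q1) ⧸ m') := Ideal.Quotient.field m'
      exact finite_of_finite_type_of_isJacobsonRing k _
    haveI : Algebra.IsIntegral k ((A ⧸ Q1) ⧸ m') := Algebra.IsIntegral.of_finite k _
    obtain ⟨c, hc⟩ := (IsAlgClosed.algebraMap_bijective_of_isIntegral
      (k := k) (K := (A ⧸ Q1) ⧸ m')).2 (Ideal.Quotient.mk m' a)
    refine ⟨c, ?_⟩
    have htower : algebraMap k ((A ⧸ Q1) ⧸ m') c
        = Ideal.Quotient.mk m' (algebraMap k (A ⧸ Q1) c) := by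
      rw [IsScalarTower.algebraMap_apply k (A ⧸ Q1) ((A ⧸ Q1) ⧸ m') c,
        Ideal.Quotient.algebraMap_eq]
    rw [← Ideal.Quotient.eq_zero_iff_mem, map_sub, ← hc, htower, sub_self]
  -- there is an element outside P whose image in (A ⧸ Q1) is non-constant
  obtain ⟨f, hfP, hfnc⟩ : ∃ f : A, f ∉ P ∧ ∀ c : k, φ f ≠ algebraMap k (A ⧸ Q1) c := by
    by_contra hcon
    push_neg at hcon
    have hall : ∀ a : A, ∃ c : k, φ a = algebraMap k (A ⧸ Q1) c := by
      intro a
      by_cases ha : a ∈ P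
      · have h1P : (1 : A) ∉ P := fun h => hP.ne_top (Ideal.eq_top_iff_one P |>.mpr h)
        have ha1 : a + 1 ∉ P := fun h => h1P (by simpa using P.sub_mem h ha)
        obtain ⟨c, hc⟩ := hcon (a + 1) ha1
        refine ⟨c - 1, ?_⟩
        have hstep : φ a = algebraMap k (A ⧸ Q1) c - 1 := by
          rw [← hc, map_add, map_one]; ring
        rw [hstep, map_sub, map_one]
      · exact hcon a ha
    -- then (A ⧸ Q1) consists of "constants", contradicting Q1 < M
    obtain ⟨x, hxM, hxQ1⟩ := SetLike.exists_of_lt h2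
    obtain ⟨c, hc⟩ := hall x
    have hcne : c ≠ 0 := by
      intro h0
      apply hxQ1
      rw [← Ideal.Quotient.eq_zero_iff_mem]
      rw [hc, h0, map_zero]
    have : φ (algebraMap k A c⁻¹ * x - 1) = 0 := by
      rw [map_sub, map_mul, hφalg, hc, map_one, ← map_mul, inv_mul_cancel₀ hcne, map_one]
      ring
    rw [Ideal.Quotient.eq_zero_iff_mem] at this
    have hmem : algebraMap k A c⁻¹ * x - 1 ∈ M := h2.le this
    have : (1 : A) ∈ M := by
      have := M.sub_mem (M.mul_mem_left (algebraMap k A c⁻¹) hxM) hmem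
      simpa using this
    exact hM.ne_top (Ideal.eq_top_iff_one M |>.mpr this)
  -- the set of values attained by f on maximal ideals of (A ⧸ Q1) is infinite
  set C := {c : k | ∃ m' : Ideal (A ⧸ Q1), m'.IsMaximal ∧ φ f - algebraMap k (A ⧸ Q1) c ∈ m'} with hC
  have hCinf : C.Infinite := by
    intro hCfin
    set g : (A ⧸ Q1) := ∏ c ∈ hCfin.toFinset, (φ f - algebraMap k (A ⧸ Q1) c) with hg
    have hgmem : ∀ m' : Ideal (A ⧸ Q1), m'.IsMaximal → g ∈ m' := by
      intro m' hm'
      obtain ⟨c, hc⟩ := val m' hm' (φ f)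
      have hcC : c ∈ hCfin.toFinset := hCfin.mem_toFinset.mpr ⟨m', hm', hc⟩
      obtain ⟨t, ht⟩ := Finset.dvd_prod_of_mem (fun c => φ f - algebraMap k (A ⧸ Q1) c) hcC
      rw [hg, ht]
      exact m'.mul_mem_right t hc
    have hg0 : g = 0 := by
      have : g ∈ Ideal.jacobson ⊥ := Ideal.mem_sInf.mpr (fun {J} hJ => hgmem J hJ.2)
      have hrad : (⊥ : Ideal (A ⧸ Q1)).IsRadical :=
        Ideal.radical_bot_of_noZeroDivisors (R := A ⧸ Q1) ▸
          Ideal.radical_isRadical (⊥ : Ideal (A ⧸ Q1))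
      rwa [IsJacobsonRing.out' _ hrad, Submodule.mem_bot] at this
    obtain ⟨c, _, hc⟩ := Finset.prod_eq_zero_iff.mp (hg ▸ hg0)
    exact hfnc c (by rwa [sub_eq_zero] at hc)
  -- choose a value c₀ attained with f - c₀ ∉ P
  have hbad : {c : k | f - algebraMap k A c ∈ P}.Subsingleton := by
    intro c hc c' hc'
    by_contra hne
    have : algebraMap k A (c' - c) ∈ P := by
      have := P.sub_mem hc hc'
      rw [map_sub]
      convert this using 1
      ring
    have hunit : IsUnit (algebraMap k A (c' - c)) :=
      (algebraMap k A).isUnit_map (Ne.isUnit (sub_ne_zero.mpr (Ne.symm hne)))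
    exact hP.ne_top (P.eq_top_of_isUnit_mem this hunit)
  obtain ⟨c₀, hc₀C, hc₀P⟩ : ∃ c₀ ∈ C, f - algebraMap k A c₀ ∉ P := by
    obtain ⟨c₀, hc₀⟩ := (hCinf.diff (Set.Subsingleton.finite hbad)).nonempty
    exact ⟨c₀, hc₀.1, hc₀.2⟩
  obtain ⟨m', hm', hmem'⟩ := hc₀C
  set M₂ := m'.comap φ with hM₂
  haveI hM₂max : M₂.IsMaximal := Ideal.comap_isMaximal_of_surjective φ Ideal.Quotient.mk_surjective
  set g₀ := f - algebraMap k A c₀ with hg₀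
  have hg₀M₂ : g₀ ∈ M₂ := by
    rw [hM₂, Ideal.mem_comap, hg₀, map_sub, hφalg]
    exact hmem'
  have hQ1M₂ : Q1 ≤ M₂ := by
    intro x hx
    rw [hM₂, Ideal.mem_comap, hφ, Ideal.Quotient.eq_zero_iff_mem.mpr hx]
    exact m'.zero_mem
  haveI : M₂.IsPrime := hM₂max.isPrime
  obtain ⟨q, hqmin, hqle⟩ := Ideal.exists_minimalPrimes_le
    ((Ideal.span_singleton_le_iff_mem M₂).mpr hg₀M₂)
  have hqprime : q.IsPrime := hqmin.1.1
  have hqg₀ : g₀ ∈ q := hqmin.1.2 (Ideal.mem_span_singleton_self g₀)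
  have hqmax : q.IsMaximal := by
    by_contra hq
    exact hc₀P (H q hqprime hq hqg₀)
  have hqM₂ : q = M₂ := hqmax.eq_of_le hM₂max.ne_top hqle
  have hQ1M₂' : Q1 < M₂ := lt_of_le_of_ne hQ1M₂ (fun h => hQ1nm (h ▸ hM₂max))
  have := kpit M₂ hM₂max g₀ (hqM₂ ▸ hqmin) Q1 hQ1 hQ1M₂'
  exact h1.ne' this

/-- A Jacobson domain that is not a field has infinitely many maximal ideals. -/
lemma infinite_maximals {B : Type*} [CommRing B] [IsDomain B] [IsJacobsonRing B]
    (h : ¬ IsField B) : {m : Ideal B | m.IsMaximal}.Infinite := by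
  intro hfin
  have hne : ∀ m : Ideal B, m.IsMaximal → m ≠ ⊥ := by
    intro m hm hbot
    apply h
    refine ⟨exists_pair_ne B, mul_comm, ?_⟩
    intro a ha
    obtain ⟨y, i, hi, hyi⟩ := hm.exists_inv (by rw [hbot]; exact fun hb => ha hb)
    rw [hbot] at hi
    rw [Submodule.mem_bot] at hi
    exact ⟨y, by rw [mul_comm]; linear_combination hyi - i - hi⟩
  classical
  set pick : Ideal B → B := fun m => if h : ∃ x, x ∈ m ∧ x ≠ 0 then h.choose else 1 with hpick
  have hpickspec : ∀ m : Ideal B, m.IsMaximal → pick m ∈ m ∧ pick m ≠ 0 := by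
    intro m hm
    obtain ⟨x, hx1, hx2⟩ := Submodule.exists_mem_ne_zero_of_ne_bot (hne m hm)
    have hex : ∃ x, x ∈ m ∧ x ≠ 0 := ⟨x, hx1, hx2⟩
    rw [hpick]
    simp only [dif_pos hex]
    exact hex.choose_spec
  set g : B := ∏ m ∈ hfin.toFinset, pick m with hg
  have hgmem : g ∈ Ideal.jacobson ⊥ := by
    rw [Ideal.jacobson]
    refine Ideal.mem_sInf.mpr ?_
    rintro J ⟨-, hJ⟩
    have hJT : J ∈ hfin.toFinset := hfin.mem_toFinset.mpr hJ
    obtain ⟨t, ht⟩ := Finset.dvd_prod_of_mem pick hJT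
    rw [hg, ht]
    exact J.mul_mem_right t (hpickspec J hJ).1
  have hrad : (⊥ : Ideal B).IsRadical :=
    Ideal.radical_bot_of_noZeroDivisors (R := B) ▸ Ideal.radical_isRadical (⊥ : Ideal B)
  rw [IsJacobsonRing.out' _ hrad, Submodule.mem_bot] at hgmem
  obtain ⟨m, hmT, hm0⟩ := Finset.prod_eq_zero_iff.mp (hg ▸ hgmem)
  exact (hpickspec m (hfin.mem_toFinset.mp hmT)).2 hm0

/-- In a Jacobson domain, the zero locus of a non-maximal prime is infinite. -/
lemma zeroLocus_infinite_of_not_maximal {B : Type*} [CommRing B] [IsDomain B] [IsJacobsonRing B]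
    (q : Ideal B) (hq : q.IsPrime) (hqm : ¬ q.IsMaximal) :
    (PrimeSpectrum.zeroLocus (q : Set B)).Infinite := by
  haveI := hq
  have hnf : ¬ IsField (B ⧸ q) := fun h =>
    hqm ((Ideal.Quotient.maximal_ideal_iff_isField_quotient q).mpr h)
  have hinf := infinite_maximals hnf
  haveI := hinf.to_subtype
  refine Set.infinite_of_injective_forall_mem
    (f := fun m : {m : Ideal (B ⧸ q) | m.IsMaximal} =>
      (⟨(m : Ideal (B ⧸ q)).comap (Ideal.Quotient.mk q),
        (Ideal.comap_isMaximal_of_surjective _ Ideal.Quotient.mk_surjective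
          (K := (m : Ideal (B ⧸ q))) (H := m.2)).isPrime⟩ : PrimeSpectrum B)) ?_ ?_
  · intro m m' hmm
    have h1 : (m : Ideal (B ⧸ q)).comap (Ideal.Quotient.mk q)
        = (m' : Ideal (B ⧸ q)).comap (Ideal.Quotient.mk q) := congrArg PrimeSpectrum.asIdeal hmm
    have h2 := congrArg (Ideal.map (Ideal.Quotient.mk q)) h1
    rw [Ideal.map_comap_of_surjective _ Ideal.Quotient.mk_surjective,
      Ideal.map_comap_of_surjective _ Ideal.Quotient.mk_surjective] at h2
    exact Subtype.ext h2
  · intro m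
    rw [PrimeSpectrum.mem_zeroLocus]
    intro x hx
    show Ideal.Quotient.mk q x ∈ (m : Ideal (B ⧸ q))
    rw [Ideal.Quotient.eq_zero_iff_mem.mpr hx]
    exact Submodule.zero_mem _


/-- Let `k` be an algebraically closed field and `X` an integral scheme of finite type
over `k`. Then no point of the underlying space of `X` is an attractive point. -/
theorem no_attractive_point_of_integral_scheme (k : Type) [Field k] [IsAlgClosed k]
    (X : Scheme) [IsIntegral X] (f : X ⟶ Spec (CommRingCat.of k))
    [LocallyOfFiniteType f] [QuasiCompact f] :
    ∀ p : X, ¬ IsAttractivePoint X p := by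
  intro p hp
  obtain ⟨⟨F, hFc, hFinf, hFne⟩, hmem⟩ := hp
  -- choose an affine open neighbourhood of p
  obtain ⟨U, hUmem, hpU, -⟩ := TopologicalSpace.Opens.isBasis_iff_nbhd.mp
    X.isBasis_affineOpens (U := ⊤) trivial
  have hUaff : IsAffineOpen U := hUmem
  haveI : Nonempty U := ⟨⟨p, hpU⟩⟩
  -- the ring of functions is a finitely generated k-algebra domain
  have e : U ≤ f ⁻¹ᵁ ⊤ := by simp
  have hFT : (f.appLE ⊤ U e).hom.FiniteType :=
    HasRingHomProperty.appLE @LocallyOfFiniteType f ‹_› ⟨⊤, isAffineOpen_top _⟩ ⟨U, hUaff⟩ e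
  set ψ : k →+* Γ(X, U) := (f.appLE ⊤ U e).hom.comp
    ((Scheme.ΓSpecIso (CommRingCat.of k)).commRingCatIsoToRingEquiv.symm.toRingHom) with hψ
  letI : Algebra k Γ(X, U) := ψ.toAlgebra
  haveI : Algebra.FiniteType k Γ(X, U) := RingHom.FiniteType.comp hFT
    (RingHom.FiniteType.of_surjective _
      ((Scheme.ΓSpecIso (CommRingCat.of k)).commRingCatIsoToRingEquiv.symm.surjective))
  haveI : IsNoetherianRing Γ(X, U) := Algebra.FiniteType.isNoetherianRing k _
  haveI : IsJacobsonRing Γ(X, U) := isJacobsonRing_of_finiteType (A := k)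
  -- the open immersion Spec Γ(X, U) → X
  set φ : PrimeSpectrum Γ(X, U) → X := ⇑hUaff.fromSpec.base with hφ
  have hemb : Topology.IsEmbedding φ := hUaff.fromSpec.isOpenEmbedding.isEmbedding
  have hrange : Set.range φ = (U : Set X) := hUaff.range_fromSpec
  have hcont : Continuous φ := hUaff.fromSpec.base.hom.continuous
  obtain ⟨P, hP⟩ : p ∈ Set.range φ := hrange ▸ hpU
  by_cases hEfin : (φ ⁻¹' F).Finite
  · -- then F \ U is closed infinite and avoids p
    have hFU : (F ∩ U).Finite := by
      have himg : φ '' (φ ⁻¹' F) = F ∩ Set.range φ := Set.image_preimage_eq_inter_range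
      rw [← hrange, ← himg]
      exact hEfin.image φ
    have hdiff : (F \ U).Infinite := by
      intro hfin
      exact hFinf (by
        have : F = (F ∩ U) ∪ (F \ U) := by rw [Set.inter_union_diff]
        rw [this]
        exact hFU.union hfin)
    have hdiffc : IsClosed (F \ U) := hFc.inter (isClosed_compl_iff.mpr U.isOpen)
    have := hmem _ hdiffc hdiff
    exact this.2 hpU
  · have hEinf : (φ ⁻¹' F).Infinite := hEfin
    have hEc : IsClosed (φ ⁻¹' F) := hFc.preimage hcont
    set I : Ideal Γ(X, U) := PrimeSpectrum.vanishingIdeal (φ ⁻¹' F) with hI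
    have hEz : PrimeSpectrum.zeroLocus (I : Set Γ(X, U)) = φ ⁻¹' F := by
      rw [hI, PrimeSpectrum.zeroLocus_vanishingIdeal_eq_closure, hEc.closure_eq]
    have hIbot : I ≠ ⊥ := by
      intro h0
      have huniv : φ ⁻¹' F = Set.univ := by
        rw [← hEz, h0]
        simpa using PrimeSpectrum.zeroLocus_bot
      have hUF : (U : Set X) ⊆ F := by
        rw [← hrange]
        rintro - ⟨x, rfl⟩
        have : x ∈ φ ⁻¹' F := huniv ▸ Set.mem_univ x
        exact this
      have hdense : Dense (U : Set X) := U.isOpen.dense ⟨p, hpU⟩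
      have : Set.univ ⊆ F := by
        rw [← hdense.closure_eq]
        exact closure_minimal hUF hFc
      exact hFne (Set.eq_univ_of_univ_subset this)
    -- a non-maximal prime over I
    obtain ⟨Q1, hQ1p, hIQ1, hQ1nm⟩ :
        ∃ Q1 : Ideal Γ(X, U), Q1.IsPrime ∧ I ≤ Q1 ∧ ¬ Q1.IsMaximal := by
      by_contra hcon
      push_neg at hcon
      apply hEinf
      have hsub : φ ⁻¹' F ⊆ PrimeSpectrum.asIdeal ⁻¹' I.minimalPrimes := by
        intro x hx
        have hIx : I ≤ x.asIdeal := by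
          rw [← hEz] at hx
          exact (PrimeSpectrum.mem_zeroLocus _ _).mp hx
        obtain ⟨q, hqmin, hqle⟩ := Ideal.exists_minimalPrimes_le (J := x.asIdeal) hIx
        have hqmax : q.IsMaximal := hcon q hqmin.1.1 hqmin.1.2
        have : q = x.asIdeal := hqmax.eq_of_le x.isPrime.ne_top hqle
        rw [Set.mem_preimage, ← this]
        exact hqmin
      refine Set.Finite.subset ?_ hsub
      refine Set.Finite.preimage ?_ ?_
      · exact Set.injOn_of_injective (fun a b hab => PrimeSpectrum.ext hab)
      · rw [Ideal.minimalPrimes_eq_comap]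
        exact (minimalPrimes.finite_of_isNoetherianRing _).image _
    have hQ1bot : ⊥ < Q1 := by
      rcases eq_or_ne Q1 ⊥ with h | h
      · exact absurd (le_bot_iff.mp (h ▸ hIQ1)) hIbot
      · exact bot_lt_iff_ne_bot.mpr h
    obtain ⟨M, hMmax, hQ1M⟩ := Ideal.exists_le_maximal Q1 hQ1p.ne_top
    have hQ1Mlt : Q1 < M := lt_of_le_of_ne hQ1M (fun h => hQ1nm (h ▸ hMmax))
    -- every non-maximal prime is contained in P
    have H : ∀ q : Ideal Γ(X, U), q.IsPrime → ¬ q.IsMaximal → q ≤ P.asIdeal := by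
      intro q hqp hqm
      set xq : PrimeSpectrum Γ(X, U) := ⟨q, hqp⟩ with hxq
      have hcl : closure ({xq} : Set (PrimeSpectrum Γ(X, U)))
          = PrimeSpectrum.zeroLocus (q : Set Γ(X, U)) := PrimeSpectrum.closure_singleton xq
      have hpre : φ ⁻¹' (closure {φ xq}) = closure ({xq} : Set (PrimeSpectrum Γ(X, U))) := by
        rw [hemb.closure_eq_preimage_closure_image {xq}, Set.image_singleton]
      have hzinf := zeroLocus_infinite_of_not_maximal q hqp hqm
      have hinfX : (closure {φ xq}).Infinite := by
        have h1 : (closure ({xq} : Set (PrimeSpectrum Γ(X, U)))).Infinite := hcl ▸ hzinf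
        have h2 := h1.image (Set.injOn_of_injective hemb.injective)
        refine Set.Infinite.mono ?_ h2
        rw [← hpre]
        exact Set.image_preimage_subset φ _
      have hpcl : p ∈ closure {φ xq} := hmem _ isClosed_closure hinfX
      have hPcl : P ∈ φ ⁻¹' (closure {φ xq}) := by
        rw [Set.mem_preimage, hP]
        exact hpcl
      rw [hpre, hcl] at hPcl
      exact (PrimeSpectrum.mem_zeroLocus _ _).mp hPcl
    exact core_contradiction (k := k) P.asIdeal Q1 M P.isPrime hQ1p hMmax hQ1bot hQ1Mlt H
end

section
/- Suppose X is a topological space in which every point is closed (T1), and (X_d)_{d ∈ ℕ} is an increasing sequence of closed subsets of X with union X such that a subset F ⊆ X is closed if and only if F ∩ X_d is closed in X_d for every d (the topology of X is coherent with the X_d). Assume moreover that X_d ≠ X_{d+1} for every d. Then for every point p ∈ X there exists an infinite closed subset F ⊆ X with p ∉ F; in particular, X has no attractive point. -/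
/-- Let `X` be a T1 space whose topology is coherent with an increasing sequence of closed
subsets `X_d` covering `X`, with `X_d ≠ X_{d+1}` for every `d`. Then every point of `X`
lies outside some infinite closed subset; in particular `X` has no attractive point. -/
theorem exists_infinite_closed_avoiding_of_coherent (X : Type*) [TopologicalSpace X]
    [T1Space X] (Xd : ℕ → Set X)
    (hmono : Monotone Xd)
    (hclosed : ∀ d, IsClosed (Xd d))
    (hunion : (⋃ d, Xd d) = Set.univ)
    (hcoherent : ∀ F : Set X, IsClosed F ↔ ∀ d, IsClosed {x : Xd d | (x : X) ∈ F})
    (hne : ∀ d, Xd d ≠ Xd (d + 1)) :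
    (∀ p : X, ∃ F : Set X, IsClosed F ∧ F.Infinite ∧ p ∉ F) ∧
    ∀ p : X, ¬ IsAttractivePoint X p := by
  -- choose points in the successive differences
  have hex : ∀ d, ∃ x, x ∈ Xd (d + 1) ∧ x ∉ Xd d := by
    intro d
    by_contra h
    push_neg at h
    exact hne d (le_antisymm (hmono (Nat.le_succ d)) (fun x hx => h x hx))
  choose f hf1 hf2 using hex
  -- f d ∉ Xd e for e ≤ d
  have hnot : ∀ {d e : ℕ}, e ≤ d → f d ∉ Xd e := fun {d e} h hx => hf2 d (hmono h hx)
  have hinj : Function.Injective f := by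
    intro a b hab
    by_contra hne'
    rcases Nat.lt_or_ge a b with h | h
    · exact hnot (le_refl b) (hab ▸ hmono (Nat.succ_le_of_lt h) (hf1 a))
    · have h' : a ≠ b := hne'
      have hlt : b < a := lt_of_le_of_ne h (Ne.symm h')
      exact hnot (le_refl a) (hab ▸ hmono (Nat.succ_le_of_lt hlt) (hf1 b))
  have main : ∀ p : X, ∃ F : Set X, IsClosed F ∧ F.Infinite ∧ p ∉ F := by
    intro p
    obtain ⟨N, hN⟩ : ∃ N, p ∈ Xd N := by
      have := Set.mem_univ p
      rw [← hunion] at this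
      exact Set.mem_iUnion.mp this
    refine ⟨f '' Set.Ici N, ?_, ?_, ?_⟩
    · rw [hcoherent]
      intro d
      have hfin : {x : Xd d | (x : X) ∈ f '' Set.Ici N}.Finite := by
        have : {x : Xd d | (x : X) ∈ f '' Set.Ici N} ⊆
            Subtype.val ⁻¹' (f '' Set.Ico N d) := by
          rintro ⟨x, hxd⟩ ⟨k, hk, hfk⟩
          refine ⟨k, ⟨hk, ?_⟩, hfk⟩
          by_contra hkd
          push_neg at hkd
          exact hnot hkd (hfk ▸ hxd)
        exact Set.Finite.subset (Set.Finite.preimage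
          (Subtype.val_injective.injOn) ((Set.finite_Ico N d).image f)) this
      exact hfin.isClosed
    · exact Set.infinite_of_injective_forall_mem (f := fun n : Set.Ici N => f n)
        (fun a b h => Subtype.ext (hinj h)) (fun n => ⟨n, n.2, rfl⟩)
    · rintro ⟨k, hk, hfk⟩
      exact hnot (le_refl k) (hfk ▸ hmono hk hN)
  refine ⟨main, fun p hp => ?_⟩
  obtain ⟨F, hF1, hF2, hF3⟩ := main p
  exact hF3 (hp.2 F hF1 hF2)
end

section
/- Fix integers n ≥ 2 and d ≥ 1, and let H_d ⊆ ℙ(V_d), the relation ≈ on H_d, and the Euclidean topology be as in the context. Then ≈ is an equivalence relation on H_d; the quotient map π_d : H_d → H_d/≈ (where H_d/≈ carries the quotient topology) is a closed map; every equivalence class of ≈ is a compact subset of H_d; and the quotient space H_d/≈ is Hausdorff. -/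
open MvPolynomial

/-! For `n, d ≥ 1` we consider the space `V_d` of `(n+1)`-tuples of homogeneous degree-`d`
polynomials in `ℂ[x_0, …, x_n]`, with its canonical topology as a finite-dimensional
complex vector space (realized as the coefficientwise topology, which agrees with the
canonical one on this finite-dimensional subspace), the projectivization `ℙ(V_d)` with
the quotient (Euclidean) topology, the subset `H_d` of classes of birational tuples with
the subspace topology, and the relation `≈` ("defining the same map") on `H_d`. -/

/-- The coefficientwise topology on polynomials; on each finite-dimensional subspace of
homogeneous polynomials of fixed degree it coincides with the canonical Hausdorff
topology of a finite-dimensional complex vector space. -/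
noncomputable instance polyTopology (n : ℕ) :
    TopologicalSpace (MvPolynomial (Fin (n + 1)) ℂ) :=
  TopologicalSpace.induced
    (fun p (s : Fin (n + 1) →₀ ℕ) => MvPolynomial.coeff s p) inferInstance

/-- `(n+1)`-tuples of polynomials in `ℂ[x_0, …, x_n]`. -/
abbrev Tuple (n : ℕ) := Fin (n + 1) → MvPolynomial (Fin (n + 1)) ℂ

/-- A tuple all of whose components are homogeneous of degree `d` (an element of `V_d`). -/
def IsHomTuple (n d : ℕ) (f : Tuple n) : Prop := ∀ i, (f i).IsHomogeneous d

/-- The nonzero elements of `V_d`, i.e. `V_d ∖ {0}` with the subspace topology. -/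
abbrev NzHomTuple (n d : ℕ) := {f : Tuple n // IsHomTuple n d f ∧ f ≠ 0}

/-- Proportionality of nonzero tuples by a nonzero scalar: the relation defining the
projectivization `ℙ(V_d)`. -/
def ScalarRel (n d : ℕ) (F G : NzHomTuple n d) : Prop :=
  ∃ c : ℂ, c ≠ 0 ∧ (G : Tuple n) = c • (F : Tuple n)

/-- The projectivization `ℙ(V_d)` with the quotient (Euclidean) topology. -/
abbrev ProjV (n d : ℕ) := Quot (ScalarRel n d)

/-- A nonzero tuple `f ∈ V_d` is birational if there are `e ≥ 1`, a tuple `g` of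
homogeneous polynomials of degree `e`, and a nonzero homogeneous polynomial `a` of degree
`d·e − 1` with `g_i(f_0, …, f_n) = a·x_i` for all `i`. -/
def IsBirational (n d : ℕ) (f : Tuple n) : Prop :=
  ∃ e : ℕ, 1 ≤ e ∧ ∃ g : Tuple n, (∀ i, (g i).IsHomogeneous e) ∧
    ∃ a : MvPolynomial (Fin (n + 1)) ℂ, a ≠ 0 ∧ a.IsHomogeneous (d * e - 1) ∧
      ∀ i, MvPolynomial.aeval f (g i) = a * MvPolynomial.X i

/-- `H_d ⊆ ℙ(V_d)`: the set of classes of birational tuples, with the subspace topology. -/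
abbrev Hd (n d : ℕ) :=
  {x : ProjV n d // ∃ F : NzHomTuple n d,
    IsBirational n d (F : Tuple n) ∧ Quot.mk (ScalarRel n d) F = x}

/-- The relation `≈` on `H_d`: two (classes of) birational tuples `f, g` define the same
map if `f_i·g_j = f_j·g_i` for all `i, j`. -/
def SameMap (n d : ℕ) (x y : Hd n d) : Prop :=
  ∃ F G : NzHomTuple n d,
    Quot.mk (ScalarRel n d) F = (x : ProjV n d) ∧
    Quot.mk (ScalarRel n d) G = (y : ProjV n d) ∧
    ∀ i j, (F : Tuple n) i * (G : Tuple n) j = (F : Tuple n) j * (G : Tuple n) i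

set_option maxHeartbeats 1000000
set_option synthInstance.maxHeartbeats 1000000

abbrev MP (n : ℕ) := MvPolynomial (Fin (n + 1)) ℂ

lemma continuous_coeff (n : ℕ) (s : Fin (n+1) →₀ ℕ) :
    Continuous (fun p : MP n => coeff s p) :=
  (continuous_apply s).comp continuous_induced_dom

lemma continuous_to_MP {X : Type*} [TopologicalSpace X] {n : ℕ} {f : X → MP n}
    (h : ∀ s, Continuous fun x => coeff s (f x)) : Continuous f :=
  continuous_induced_rng.2 (continuous_pi h)

instance (n : ℕ) : IsTopologicalAddGroup (MP n) where
  continuous_add := continuous_to_MP fun s => by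
      simpa [coeff_add] using
        ((continuous_coeff n s).comp continuous_fst).fun_add ((continuous_coeff n s).comp continuous_snd)
  continuous_neg := continuous_to_MP fun s => by
      simpa [coeff_neg] using (continuous_coeff n s).fun_neg

instance (n : ℕ) : ContinuousSMul ℂ (MP n) := by
  constructor
  exact continuous_to_MP fun s => by
    simpa [coeff_smul, smul_eq_mul] using
      continuous_fst.fun_mul ((continuous_coeff n s).comp continuous_snd)

instance (n : ℕ) : T2Space (MP n) := by
  have h : Function.Injective (fun p : MP n => fun (s : Fin (n + 1) →₀ ℕ) => coeff s p) := by
    intro p q h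
    exact MvPolynomial.ext _ _ fun s => congrFun h s
  exact (Topology.IsEmbedding.mk ⟨rfl⟩ h).t2Space

/-- The submodule `V_d` of homogeneous tuples. -/
noncomputable def homW (n d : ℕ) : Submodule ℂ (Tuple n) where
  carrier := {f | IsHomTuple n d f}
  add_mem' := fun hf hg i => (hf i).add (hg i)
  zero_mem' := fun i => isHomogeneous_zero _ _ _
  smul_mem' := fun c f hf i => (homogeneousSubmodule _ ℂ d).smul_mem c (hf i)

instance (n d : ℕ) : FiniteDimensional ℂ (homW n d) := by
  let L : homW n d →ₗ[ℂ] (Fin (n+1) → restrictTotalDegree (Fin (n+1)) ℂ d) :=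
    { toFun := fun f i => ⟨(f : Tuple n) i,
        (mem_restrictTotalDegree _ _ _).2 (f.2 i).totalDegree_le⟩
      map_add' := fun f g => by funext i; ext; rfl
      map_smul' := fun c f => by funext i; ext; rfl }
  have hinj : Function.Injective L := by
    intro f g h
    ext i : 2
    exact congrArg Subtype.val (congrFun h i)
  exact FiniteDimensional.of_injective L hinj

lemma scalarRel_equivalence (n d : ℕ) : Equivalence (ScalarRel n d) := by
  constructor
  · exact fun F => ⟨1, one_ne_zero, by simp⟩
  · rintro F G ⟨c, hc, h⟩
    exact ⟨c⁻¹, inv_ne_zero hc, by rw [h, smul_smul, inv_mul_cancel₀ hc, one_smul]⟩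
  · rintro F G H ⟨c, hc, h⟩ ⟨c', hc', h'⟩
    exact ⟨c' * c, mul_ne_zero hc' hc, by rw [h', h, smul_smul]⟩

lemma mk_eq_mk {n d : ℕ} {F G : NzHomTuple n d} :
    Quot.mk (ScalarRel n d) F = Quot.mk (ScalarRel n d) G ↔ ScalarRel n d F G := by
  rw [Quot.eq]
  exact (scalarRel_equivalence n d).eqvGen_iff

/-- smul as a self-map of `NzHomTuple`. -/
noncomputable def scMap (n d : ℕ) (c : ℂ) (hc : c ≠ 0) (F : NzHomTuple n d) : NzHomTuple n d :=
  ⟨c • (F : Tuple n), (homW n d).smul_mem c F.2.1, by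
    intro h
    apply F.2.2
    have := congrArg (fun v => c⁻¹ • v) h
    simpa [smul_smul, inv_mul_cancel₀ hc] using this⟩

lemma continuous_scMap (n d : ℕ) (c : ℂ) (hc : c ≠ 0) : Continuous (scMap n d c hc) := by
  apply Continuous.subtype_mk
  exact ((continuous_const.fun_smul (continuous_subtype_val :
    Continuous fun F : NzHomTuple n d => (F : Tuple n))) :
    Continuous fun F : NzHomTuple n d => c • (F : Tuple n))

lemma isOpenMap_mk (n d : ℕ) : IsOpenMap (Quot.mk (ScalarRel n d)) := by
  intro U hU
  rw [isOpen_coinduced]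
  have : Quot.mk (ScalarRel n d) ⁻¹' (Quot.mk (ScalarRel n d) '' U) =
      ⋃ c : {c : ℂ // c ≠ 0}, (scMap n d c.1⁻¹ (inv_ne_zero c.2)) ⁻¹' U := by
    ext F
    simp only [Set.mem_preimage, Set.mem_image, Set.mem_iUnion]
    constructor
    · rintro ⟨G, hGU, hGF⟩
      obtain ⟨c, hc, h⟩ := mk_eq_mk.1 hGF
      refine ⟨⟨c, hc⟩, ?_⟩
      have : scMap n d c⁻¹ (inv_ne_zero hc) F = G := by
        apply Subtype.ext
        show c⁻¹ • (F : Tuple n) = (G : Tuple n)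
        rw [h, smul_smul, inv_mul_cancel₀ hc, one_smul]
      rwa [this]
    · rintro ⟨c, hc⟩
      refine ⟨scMap n d c.1⁻¹ (inv_ne_zero c.2) F, hc, ?_⟩
      apply mk_eq_mk.2
      refine ⟨c.1, c.2, ?_⟩
      show (F : Tuple n) = c.1 • (c.1⁻¹ • (F : Tuple n))
      rw [smul_smul, mul_inv_cancel₀ c.2, one_smul]
  rw [this]
  exact isOpen_iUnion fun c => (continuous_scMap n d _ _).isOpen_preimage U hU

lemma isOpenQuotientMap_mk (n d : ℕ) : IsOpenQuotientMap (Quot.mk (ScalarRel n d)) :=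
  ⟨Quot.exists_rep, continuous_quot_mk, isOpenMap_mk n d⟩

lemma isQuotientMap_mk2 (n d : ℕ) :
    Topology.IsQuotientMap (Prod.map (Quot.mk (ScalarRel n d)) (Quot.mk (ScalarRel n d))) := by
  refine IsOpenMap.isQuotientMap ?_ ?_ ?_
  · exact (isOpenMap_mk n d).prodMap (isOpenMap_mk n d)
  · exact (continuous_quot_mk.comp continuous_fst).prodMk (continuous_quot_mk.comp continuous_snd)
  · exact ((isOpenQuotientMap_mk n d).surjective).prodMap ((isOpenQuotientMap_mk n d).surjective)

noncomputable def eqW (n d : ℕ) :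
    homW n d ≃ₗ[ℂ] (Fin (Module.finrank ℂ (homW n d)) → ℂ) :=
  (Module.finBasis ℂ (homW n d)).equivFun

lemma continuous_eqW (n d : ℕ) : Continuous (eqW n d) :=
  LinearMap.continuous_of_finiteDimensional (eqW n d).toLinearMap

lemma continuous_eqW_symm (n d : ℕ) : Continuous (eqW n d).symm :=
  LinearMap.continuous_of_finiteDimensional (eqW n d).symm.toLinearMap

instance compact_ProjV (n d : ℕ) : CompactSpace (ProjV n d) := by
  set m := Module.finrank ℂ (homW n d)
  set eL := eqW n d
  -- the map from the unit sphere onto ProjV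
  have hmem : ∀ u : Fin m → ℂ, ((eL.symm u : Tuple n)) ∈ homW n d := fun u => (eL.symm u).2
  have hker : ∀ u : Fin m → ℂ, u ≠ 0 → (eL.symm u : Tuple n) ≠ 0 := by
    intro u hu h
    apply hu
    have h1 : eL.symm u = 0 := Subtype.ext h
    have := congrArg eL h1
    simpa using this
  let ψ : Metric.sphere (0 : Fin m → ℂ) 1 → NzHomTuple n d := fun u =>
    ⟨(eL.symm u.1 : Tuple n), hmem u.1, hker u.1 (by
      intro h
      have := u.2
      rw [mem_sphere_iff_norm, h] at this
      simp at this)⟩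
  have hψcont : Continuous ψ := by
    apply Continuous.subtype_mk
    exact continuous_subtype_val.comp ((continuous_eqW_symm n d).comp continuous_subtype_val)
  have hsurj : Function.Surjective fun u => Quot.mk (ScalarRel n d) (ψ u) := by
    intro x
    obtain ⟨F, rfl⟩ := Quot.exists_rep x
    set w : homW n d := ⟨(F : Tuple n), F.2.1⟩ with hw
    have hwne : w ≠ 0 := fun h => F.2.2 (congrArg Subtype.val h)
    set v := eL w with hv
    have hvne : v ≠ 0 := by
      intro h
      apply hwne
      have := congrArg eL.symm h
      simpa [hv] using this
    have hnv : ‖v‖ ≠ 0 := norm_ne_zero_iff.2 hvne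
    set u : Fin m → ℂ := (‖v‖ : ℂ)⁻¹ • v with hu
    have hus : u ∈ Metric.sphere (0 : Fin m → ℂ) 1 := by
      rw [mem_sphere_iff_norm, sub_zero, hu, norm_smul]
      simp [hnv]
    refine ⟨⟨u, hus⟩, ?_⟩
    apply Quot.sound
    refine ⟨(‖v‖ : ℂ), by exact_mod_cast hnv, ?_⟩
    show (F : Tuple n) = (‖v‖ : ℂ) • (eL.symm u : Tuple n)
    have h1 : eL.symm u = (‖v‖ : ℂ)⁻¹ • w := by
      rw [hu, map_smul, hv, LinearEquiv.symm_apply_apply]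
    rw [h1]
    have h2 : ((((‖v‖ : ℂ)⁻¹ • w) : homW n d) : Tuple n) = (‖v‖ : ℂ)⁻¹ • (w : Tuple n) := rfl
    rw [h2, smul_smul, mul_inv_cancel₀ (by exact_mod_cast hnv), one_smul]
  constructor
  rw [← Set.range_eq_univ.mpr hsurj]
  exact isCompact_range (continuous_quot_mk.comp hψcont)

lemma continuous_chi (n d : ℕ) (i : Fin (n+1)) (s : Fin (n+1) →₀ ℕ) :
    Continuous fun F : NzHomTuple n d => coeff s ((F : Tuple n) i) :=
  (continuous_coeff n s).comp ((continuous_apply i).comp continuous_subtype_val)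

lemma scalarRel_iff_minors {n d : ℕ} (F G : NzHomTuple n d) :
    ScalarRel n d F G ↔ ∀ (i j : Fin (n+1)) (s t : Fin (n+1) →₀ ℕ),
      coeff s ((F : Tuple n) i) * coeff t ((G : Tuple n) j)
        = coeff t ((F : Tuple n) j) * coeff s ((G : Tuple n) i) := by
  constructor
  · rintro ⟨c, hc, h⟩ i j s t
    rw [h]
    show coeff s ((F : Tuple n) i) * coeff t (c • (F : Tuple n) j)
        = coeff t ((F : Tuple n) j) * coeff s (c • (F : Tuple n) i)
    rw [coeff_smul, coeff_smul, smul_eq_mul, smul_eq_mul]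
    ring
  · intro h
    obtain ⟨i₀, hi₀⟩ : ∃ i, (F : Tuple n) i ≠ 0 := by
      by_contra hc
      push_neg at hc
      exact F.2.2 (funext hc)
    obtain ⟨s₀, hs₀⟩ : ∃ s, coeff s ((F : Tuple n) i₀) ≠ 0 := by
      by_contra hc
      push_neg at hc
      exact hi₀ (MvPolynomial.ext _ _ fun s => by rw [hc s, coeff_zero])
    set c : ℂ := coeff s₀ ((G : Tuple n) i₀) / coeff s₀ ((F : Tuple n) i₀) with hcdef
    have hG : (G : Tuple n) = c • (F : Tuple n) := by
      funext j
      apply MvPolynomial.ext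
      intro t
      have hm := h i₀ j s₀ t
      show coeff t ((G : Tuple n) j) = coeff t (c • (F : Tuple n) j)
      rw [coeff_smul, smul_eq_mul, hcdef, div_mul_eq_mul_div, eq_div_iff hs₀]
      linear_combination hm
    have hcne : c ≠ 0 := by
      intro hc
      rw [hc, zero_smul] at hG
      exact G.2.2 hG
    exact ⟨c, hcne, hG⟩

instance t2_ProjV (n d : ℕ) : T2Space (ProjV n d) := by
  rw [t2_iff_isClosed_diagonal]
  rw [← (isQuotientMap_mk2 n d).isClosed_preimage]
  have heq : (Prod.map (Quot.mk (ScalarRel n d)) (Quot.mk (ScalarRel n d))) ⁻¹'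
      (Set.diagonal (ProjV n d)) =
      ⋂ (i : Fin (n+1)) (j : Fin (n+1)) (s : Fin (n+1) →₀ ℕ) (t : Fin (n+1) →₀ ℕ),
        {p : NzHomTuple n d × NzHomTuple n d |
          coeff s ((p.1 : Tuple n) i) * coeff t ((p.2 : Tuple n) j)
            = coeff t ((p.1 : Tuple n) j) * coeff s ((p.2 : Tuple n) i)} := by
    ext p
    simp only [Set.mem_preimage, Set.mem_diagonal_iff, Prod.map_apply, Prod.map_fst,
      Prod.map_snd, Set.mem_iInter, Set.mem_setOf_eq]
    rw [mk_eq_mk, scalarRel_iff_minors]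
  rw [heq]
  refine isClosed_iInter fun i => isClosed_iInter fun j => isClosed_iInter fun s =>
    isClosed_iInter fun t => isClosed_eq ?_ ?_
  · exact ((continuous_chi n d i s).comp continuous_fst).mul
      ((continuous_chi n d j t).comp continuous_snd)
  · exact ((continuous_chi n d j t).comp continuous_fst).mul
      ((continuous_chi n d i s).comp continuous_snd)

lemma prime_X_MP (n : ℕ) (i : Fin (n+1)) : Prime (X i : MP n) := by
  rw [← MulEquiv.prime_iff (renameEquiv ℂ (Equiv.swap i 0)).toMulEquiv]
  have h1 : (renameEquiv ℂ (Equiv.swap i 0)).toMulEquiv (X i : MP n) = X 0 := by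
    show (renameEquiv ℂ (Equiv.swap i 0)) (X i : MP n) = X 0
    simp [renameEquiv, Equiv.swap_apply_left]
  rw [h1, ← MulEquiv.prime_iff (finSuccEquiv ℂ n).toMulEquiv]
  have h2 : (finSuccEquiv ℂ n).toMulEquiv (X 0 : MP n) = Polynomial.X := finSuccEquiv_X_zero
  rw [h2]
  exact Polynomial.prime_X

lemma aeval_mul_tuple {n : ℕ} {φ : MP n} {e : ℕ} (hφ : φ.IsHomogeneous e)
    (r : MP n) (v : Fin (n+1) → MP n) :
    aeval (fun k => r * v k) φ = r ^ e * aeval v φ := by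
  conv_lhs => rw [φ.as_sum]
  conv_rhs => rw [φ.as_sum]
  rw [map_sum, map_sum, Finset.mul_sum]
  refine Finset.sum_congr rfl fun s hs => ?_
  rw [aeval_monomial, aeval_monomial]
  have hdeg : Finsupp.degree s = e := by
    rw [Finsupp.degree_eq_weight_one]
    exact hφ (mem_support_iff.mp hs)
  have h1 : (s.prod fun k m => (r * v k) ^ m)
      = (∏ k ∈ s.support, r ^ s k) * s.prod fun k m => v k ^ m := by
    rw [Finsupp.prod, Finsupp.prod, ← Finset.prod_mul_distrib]
    exact Finset.prod_congr rfl fun k _ => mul_pow _ _ _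
  rw [h1, Finset.prod_pow_eq_pow_sum]
  have h2 : ∑ k ∈ s.support, s k = e := by
    rw [← hdeg]; rfl
  rw [h2]; ring

lemma birational_transfer {n d : ℕ} (hn : 2 ≤ n) (hd : 1 ≤ d) {f g : Tuple n}
    (hf : IsHomTuple n d f) (hg : IsHomTuple n d g) (hf0 : f ≠ 0) (hg0 : g ≠ 0)
    (hrel : ∀ i j, f i * g j = f j * g i)
    (hbir : IsBirational n d f) : IsBirational n d g := by
  classical
  obtain ⟨e, he, G, hG, a, ha0, haH, hGf⟩ := hbir
  obtain ⟨j₀, hj₀⟩ : ∃ j, f j ≠ 0 := by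
    by_contra h
    push_neg at h
    exact hf0 (funext fun j => h j)
  -- the key identity
  have key : ∀ i j, f j ^ e * aeval g (G i) = g j ^ e * (a * X i) := by
    intro i j
    have h1 : (fun k => f j * g k) = fun k => g j * f k :=
      funext fun k => (hrel j k).trans (mul_comm _ _)
    calc f j ^ e * aeval g (G i)
        = aeval (fun k => f j * g k) (G i) := (aeval_mul_tuple (hG i) _ _).symm
      _ = aeval (fun k => g j * f k) (G i) := by rw [h1]
      _ = g j ^ e * aeval f (G i) := aeval_mul_tuple (hG i) _ _
      _ = g j ^ e * (a * X i) := by rw [hGf i]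
  -- divisibility of aeval g (G i) by X i
  have hdvd : ∀ i, (X i : MP n) ∣ aeval g (G i) := by
    intro i
    set P : MP n := X i with hP
    have hprime : Prime P := prime_X_MP n i
    -- maximal power decomposition for every nonzero f j
    have hex : ∀ j, ∃ (tj : ℕ) (uj : MP n), f j ≠ 0 → ¬ P ∣ uj ∧ f j = P ^ tj * uj := by
      intro j
      by_cases h : f j = 0
      · exact ⟨0, 0, fun hc => absurd h hc⟩
      · obtain ⟨t, u, h1, h2⟩ := WfDvdMonoid.max_power_factor h hprime.irreducible
        exact ⟨t, u, fun _ => ⟨h1, h2⟩⟩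
    choose t u htu using hex
    set S : Finset (Fin (n+1)) := Finset.univ.filter (fun j => f j ≠ 0) with hSdef
    have hS : S.Nonempty := ⟨j₀, by simp [hSdef, hj₀]⟩
    obtain ⟨j, hjS, hjmin⟩ := S.exists_min_image t hS
    have hjne : f j ≠ 0 := by
      have := hjS
      simp [hSdef] at this
      exact this
    -- X i ^ (t j) divides every f k
    have hdvdf : ∀ k, P ^ (t j) ∣ f k := by
      intro k
      by_cases hk : f k = 0
      · rw [hk]; exact dvd_zero _
      · have hkS : k ∈ S := by simp [hSdef, hk]
        obtain ⟨-, h2⟩ := htu k hk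
        rw [h2]
        exact Dvd.dvd.mul_right (pow_dvd_pow _ (hjmin k hkS)) _
    choose w hw using fun k => hdvdf k
    have hfw : f = fun k => P ^ (t j) * w k := funext fun k => hw k
    -- X i ^ (t j * e) divides a
    obtain ⟨m, hm⟩ : ∃ m : Fin (n+1), m ≠ i := by
      refine ⟨⟨if i.val = 0 then 1 else 0, by split_ifs <;> omega⟩, ?_⟩
      intro hc
      have hc' := congrArg Fin.val hc
      simp only [] at hc'
      split_ifs at hc' <;> omega
    have hta : P ^ (t j * e) ∣ a := by
      have h1 : aeval f (G m) = P ^ (t j * e) * aeval w (G m) := by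
        conv_lhs => rw [hfw]
        rw [aeval_mul_tuple (hG m), ← pow_mul]
      have h2 : P ^ (t j * e) ∣ a * X m := by
        rw [← hGf m, h1]; exact Dvd.intro _ rfl
      refine hprime.pow_dvd_of_dvd_mul_right _ ?_ h2
      intro hc
      rw [hP, X_dvd_X] at hc
      exact hm hc.symm
    obtain ⟨a₁, ha₁⟩ := hta
    obtain ⟨hPu, hfj⟩ := htu j hjne
    -- cancel P ^ (t j * e) in the key identity at (i, j)
    have hcan : u j ^ e * aeval g (G i) = g j ^ e * (a₁ * X i) := by
      have h0 : P ^ (t j * e) ≠ 0 := pow_ne_zero _ (X_ne_zero i)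
      apply mul_left_cancel₀ h0
      calc P ^ (t j * e) * (u j ^ e * aeval g (G i))
          = (P ^ (t j) * u j) ^ e * aeval g (G i) := by rw [mul_pow, ← pow_mul]; ring
        _ = f j ^ e * aeval g (G i) := by rw [← hfj]
        _ = g j ^ e * (a * X i) := key i j
        _ = P ^ (t j * e) * (g j ^ e * (a₁ * X i)) := by rw [ha₁]; ring
    have : P ∣ u j ^ e * aeval g (G i) := by
      rw [hcan, hP]
      exact dvd_mul_of_dvd_right (dvd_mul_left (X i) a₁) _
    rcases hprime.dvd_or_dvd this with h | h
    · exact absurd (hprime.dvd_of_dvd_pow h) hPu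
    · exact h
  -- define b
  obtain ⟨b, hb⟩ := hdvd 0
  rw [mul_comm] at hb
  -- all components
  have hQ : ∀ i, aeval g (G i) = b * X i := by
    intro i
    have h0 : (X (0 : Fin (n+1)) : MP n) ≠ 0 := X_ne_zero 0
    have hfj : f j₀ ^ e ≠ 0 := pow_ne_zero _ hj₀
    apply mul_left_cancel₀ hfj
    apply mul_right_cancel₀ h0
    calc f j₀ ^ e * aeval g (G i) * X 0
        = (g j₀ ^ e * (a * X i)) * X 0 := by rw [key i j₀]
      _ = (g j₀ ^ e * (a * X 0)) * X i := by ring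
      _ = (f j₀ ^ e * aeval g (G 0)) * X i := by rw [key 0 j₀]
      _ = f j₀ ^ e * (b * X 0) * X i := by rw [hb]
      _ = f j₀ ^ e * (b * X i) * X 0 := by ring
  -- b nonzero
  have hbne : b ≠ 0 := by
    intro hc
    apply hg0
    funext k
    have h1 : f k ^ e * aeval g (G 0) = g k ^ e * (a * X 0) := key 0 k
    rw [hQ 0, hc, zero_mul, mul_zero] at h1
    have h2 : g k ^ e * (a * X 0) = 0 := h1.symm
    have h3 : g k ^ e = 0 := by
      rcases mul_eq_zero.mp h2 with h | h
      · exact h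
      · exact absurd h (mul_ne_zero ha0 (X_ne_zero 0))
    exact pow_eq_zero_iff (by omega : e ≠ 0) |>.mp h3
  -- b homogeneous of degree d * e - 1
  have hbH : b.IsHomogeneous (d * e - 1) := by
    have hQH : (aeval g (G 0)).IsHomogeneous (d * e) := (hG 0).aeval g (fun i => hg i)
    rw [hQ 0] at hQH
    intro s hs
    have h1 : coeff (s + Finsupp.single 0 1) (b * X 0) ≠ 0 := by
      rwa [coeff_mul_X]
    have h2 := hQH h1
    have h3 : (Finsupp.weight 1) (s + Finsupp.single (0 : Fin (n+1)) 1)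
        = (Finsupp.weight 1) s + 1 := by
      rw [map_add]
      congr 1
      rw [Finsupp.weight_single, Pi.one_apply, smul_eq_mul, mul_one]
    rw [h3] at h2
    have hde : 1 ≤ d * e := Nat.one_le_iff_ne_zero.mpr (by positivity)
    omega
  exact ⟨e, he, G, hG, b, hbne, hbH, hQ⟩

lemma continuous_mul_MP (n : ℕ) : Continuous (fun p : MP n × MP n => p.1 * p.2) := by
  refine continuous_to_MP fun s => ?_
  classical
  have : (fun p : MP n × MP n => coeff s (p.1 * p.2)) =
      fun p => ∑ x ∈ Finset.HasAntidiagonal.antidiagonal s, coeff x.1 p.1 * coeff x.2 p.2 := by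
    funext p; rw [coeff_mul]
  rw [this]
  exact continuous_finset_sum _ fun x _ =>
    ((continuous_coeff n x.1).comp continuous_fst).mul ((continuous_coeff n x.2).comp continuous_snd)

/-- Two tuples define the same rational map: all cross products agree. -/
def CrossRel (n : ℕ) (f g : Tuple n) : Prop := ∀ i j, f i * g j = f j * g i

lemma crossRel_of_smul {n : ℕ} {f g : Tuple n} {c c' : ℂ} (hc : c ≠ 0) (hc' : c' ≠ 0)
    (h : CrossRel n (c • f) (c' • g)) : CrossRel n f g := by
  intro i j
  have h0 := h i j
  simp only [Pi.smul_apply, smul_eq_C_mul] at h0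
  have hcc : (C c * C c' : MP n) ≠ 0 := by
    apply mul_ne_zero
    · simpa using hc
    · simpa using hc'
  apply mul_left_cancel₀ hcc
  calc (C c * C c' : MP n) * (f i * g j) = (C c * f i) * (C c' * g j) := by ring
    _ = (C c * f j) * (C c' * g i) := h0
    _ = (C c * C c') * (f j * g i) := by ring

/-- The incidence relation on `ℙ(V_d) × ℙ(V_d)`. -/
def ZRel (n d : ℕ) : Set (ProjV n d × ProjV n d) :=
  {p | ∀ F G : NzHomTuple n d, Quot.mk (ScalarRel n d) F = p.1 →
    Quot.mk (ScalarRel n d) G = p.2 → CrossRel n (F : Tuple n) (G : Tuple n)}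

lemma mem_ZRel {n d : ℕ} {F G : NzHomTuple n d} :
    (Quot.mk (ScalarRel n d) F, Quot.mk (ScalarRel n d) G) ∈ ZRel n d ↔
      CrossRel n (F : Tuple n) (G : Tuple n) := by
  constructor
  · exact fun h => h F G rfl rfl
  · intro h F' G' hF' hG'
    obtain ⟨c, hc, hFc⟩ := mk_eq_mk.1 hF'
    obtain ⟨c', hc', hGc⟩ := mk_eq_mk.1 hG'
    apply crossRel_of_smul hc hc'
    rwa [← hFc, ← hGc]

lemma isClosed_ZRel (n d : ℕ) : IsClosed (ZRel n d) := by
  rw [← (isQuotientMap_mk2 n d).isClosed_preimage]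
  have heq : (Prod.map (Quot.mk (ScalarRel n d)) (Quot.mk (ScalarRel n d))) ⁻¹' ZRel n d =
      ⋂ (i : Fin (n+1)) (j : Fin (n+1)),
        {p : NzHomTuple n d × NzHomTuple n d |
          (p.1 : Tuple n) i * (p.2 : Tuple n) j = (p.1 : Tuple n) j * (p.2 : Tuple n) i} := by
    ext p
    rw [Set.mem_preimage]
    have hpm : (Prod.map (Quot.mk (ScalarRel n d)) (Quot.mk (ScalarRel n d))) p =
        (Quot.mk (ScalarRel n d) p.1, Quot.mk (ScalarRel n d) p.2) := rfl
    rw [hpm]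
    simp only [Set.mem_iInter, Set.mem_setOf_eq]
    exact mem_ZRel
  rw [heq]
  refine isClosed_iInter fun i => isClosed_iInter fun j => ?_
  have hA : ∀ (k : Fin (n+1)), Continuous fun p : NzHomTuple n d × NzHomTuple n d =>
      (p.1 : Tuple n) k :=
    fun k => (continuous_apply k).comp (continuous_subtype_val.comp continuous_fst)
  have hB : ∀ (k : Fin (n+1)), Continuous fun p : NzHomTuple n d × NzHomTuple n d =>
      (p.2 : Tuple n) k :=
    fun k => (continuous_apply k).comp (continuous_subtype_val.comp continuous_snd)
  have hc : ∀ (a b : Fin (n+1)), Continuous fun p : NzHomTuple n d × NzHomTuple n d =>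
      (p.1 : Tuple n) a * (p.2 : Tuple n) b :=
    fun a b => (continuous_mul_MP n).comp ((hA a).prodMk (hB b))
  exact isClosed_eq (hc i j) (hc j i)

/-- For `n ≥ 2`, `d ≥ 1`: `≈` is an equivalence relation on `H_d`; the quotient map
`π_d : H_d → H_d/≈` is closed; every equivalence class is compact; and `H_d/≈` is
Hausdorff. -/
theorem sameMap_quotient_properties (n d : ℕ) (hn : 2 ≤ n) (hd : 1 ≤ d) :
    Equivalence (SameMap n d) ∧
    IsClosedMap (Quot.mk (SameMap n d)) ∧
    (∀ x : Hd n d, IsCompact {y : Hd n d | SameMap n d x y}) ∧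
    T2Space (Quot (SameMap n d)) := by
  classical
  -- ≈ is an equivalence relation
  have hrefl : ∀ x : Hd n d, SameMap n d x x := by
    intro x
    obtain ⟨F, -, hF⟩ := x.2
    exact ⟨F, F, hF, hF, fun i j => mul_comm _ _⟩
  have hsymm : ∀ {x y : Hd n d}, SameMap n d x y → SameMap n d y x := by
    rintro x y ⟨F, G, hF, hG, h⟩
    refine ⟨G, F, hG, hF, fun i j => ?_⟩
    calc (G : Tuple n) i * (F : Tuple n) j
        = (F : Tuple n) j * (G : Tuple n) i := mul_comm _ _
      _ = (F : Tuple n) i * (G : Tuple n) j := h j i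
      _ = (G : Tuple n) j * (F : Tuple n) i := mul_comm _ _
  have htrans : ∀ {x y z : Hd n d}, SameMap n d x y → SameMap n d y z → SameMap n d x z := by
    rintro x y z ⟨F, G, hF, hG, h1⟩ ⟨G', H, hG', hH, h2⟩
    obtain ⟨c, hc, hGc⟩ := mk_eq_mk.1 (hG.trans hG'.symm)
    have h2' : CrossRel n (G : Tuple n) (H : Tuple n) := by
      apply crossRel_of_smul hc (one_ne_zero (α := ℂ))
      rw [one_smul, ← hGc]
      exact h2
    obtain ⟨l, hl⟩ : ∃ l, (G : Tuple n) l ≠ 0 := by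
      by_contra hcon
      push_neg at hcon
      exact G.2.2 (funext hcon)
    refine ⟨F, H, hF, hH, fun i j => ?_⟩
    apply mul_right_cancel₀ hl
    have e1 := h2' l j
    have e2 := h2' i l
    have e3 := h1 i j
    linear_combination (F : Tuple n) i * e1 + (F : Tuple n) j * e2 + (H : Tuple n) l * e3
  have hEq : Equivalence (SameMap n d) := ⟨hrefl, fun h => hsymm h, fun h h' => htrans h h'⟩
  have hmk : ∀ {x y : Hd n d},
      Quot.mk (SameMap n d) x = Quot.mk (SameMap n d) y ↔ SameMap n d x y := by
    intro x y
    rw [Quot.eq]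
    exact hEq.eqvGen_iff
  -- transferring birationality along the incidence relation
  have hHd : ∀ (x : Hd n d) (G : NzHomTuple n d),
      ((x : ProjV n d), Quot.mk (ScalarRel n d) G) ∈ ZRel n d →
      IsBirational n d (G : Tuple n) := by
    intro x G hx
    obtain ⟨F, hFb, hF⟩ := x.2
    have hcross : CrossRel n (F : Tuple n) (G : Tuple n) := hx F G hF rfl
    exact birational_transfer hn hd F.2.1 G.2.1 F.2.2 G.2.2 hcross hFb
  have hSameZ : ∀ x y : Hd n d,
      SameMap n d x y ↔ ((x : ProjV n d), (y : ProjV n d)) ∈ ZRel n d := by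
    intro x y
    constructor
    · rintro ⟨F, G, hF, hG, h⟩
      rw [← hF, ← hG]
      exact mem_ZRel.2 h
    · intro h
      obtain ⟨F, hFb, hF⟩ := x.2
      obtain ⟨G, hGb, hG⟩ := y.2
      exact ⟨F, G, hF, hG, h F G hF hG⟩
  -- the quotient map is closed
  have hclosed : IsClosedMap (Quot.mk (SameMap n d)) := by
    intro C hC
    obtain ⟨D, hD, hDC⟩ := isClosed_induced_iff.1 hC
    rw [← (isQuotientMap_quot_mk (r := SameMap n d)).isClosed_preimage]
    have hsat : Quot.mk (SameMap n d) ⁻¹' (Quot.mk (SameMap n d) '' C) =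
        Subtype.val ⁻¹' (Prod.fst '' (ZRel n d ∩ (Set.univ ×ˢ D))) := by
      ext x
      constructor
      · rintro ⟨y, hyC, hyx⟩
        have hxy : SameMap n d x y := hsymm (hmk.1 hyx)
        refine ⟨((x : ProjV n d), (y : ProjV n d)), ⟨(hSameZ x y).1 hxy, ?_⟩, rfl⟩
        refine ⟨trivial, ?_⟩
        rw [← hDC] at hyC
        exact hyC
      · rintro ⟨⟨w1, z⟩, ⟨hZ, -, hzD⟩, hw⟩
        have hw' : w1 = (x : ProjV n d) := hw
        subst hw'
        obtain ⟨G, hGz⟩ := Quot.exists_rep z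
        have hb : IsBirational n d (G : Tuple n) := hHd x G (by rw [hGz]; exact hZ)
        refine ⟨⟨z, G, hb, hGz⟩, ?_, ?_⟩
        · rw [← hDC]
          exact hzD
        · exact hmk.2 (hsymm ((hSameZ x ⟨z, G, hb, hGz⟩).2 hZ))
    rw [hsat]
    apply IsClosed.preimage continuous_subtype_val
    exact isClosedMap_fst_of_compactSpace _ ((isClosed_ZRel n d).inter (isClosed_univ.prod hD))
  -- classes are compact
  have hcompact : ∀ x : Hd n d, IsCompact {y : Hd n d | SameMap n d x y} := by
    intro x
    rw [Topology.IsEmbedding.subtypeVal.isCompact_iff]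
    have himg : Subtype.val '' {y : Hd n d | SameMap n d x y} =
        (fun z => ((x : ProjV n d), z)) ⁻¹' ZRel n d := by
      ext z
      constructor
      · rintro ⟨y, hy, rfl⟩
        exact (hSameZ x y).1 hy
      · intro hz
        obtain ⟨G, hGz⟩ := Quot.exists_rep z
        have hb : IsBirational n d (G : Tuple n) := hHd x G (by rw [hGz]; exact hz)
        exact ⟨⟨z, G, hb, hGz⟩, (hSameZ x ⟨z, G, hb, hGz⟩).2 hz, rfl⟩
    rw [himg]
    apply IsClosed.isCompact
    exact (isClosed_ZRel n d).preimage (continuous_const.prodMk continuous_id)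
  refine ⟨hEq, hclosed, hcompact, ?_⟩
  -- the quotient is Hausdorff
  have hsatmem : ∀ (S : Set (Hd n d)) (w : Hd n d),
      w ∈ Quot.mk (SameMap n d) ⁻¹' (Quot.mk (SameMap n d) '' S) ↔
        ∃ y ∈ S, SameMap n d y w := by
    intro S w
    constructor
    · rintro ⟨y, hyS, hyw⟩
      exact ⟨y, hyS, hmk.1 hyw⟩
    · rintro ⟨y, hyS, hyw⟩
      exact ⟨y, hyS, hmk.2 hyw⟩
  constructor
  intro a' b' hab
  obtain ⟨a, rfl⟩ := Quot.exists_rep a'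
  obtain ⟨b, rfl⟩ := Quot.exists_rep b'
  have hnotsame : ¬ SameMap n d a b := fun h => hab (hmk.2 h)
  have hdisj : Disjoint {y : Hd n d | SameMap n d a y} {y : Hd n d | SameMap n d b y} := by
    rw [Set.disjoint_left]
    intro y hyK hyL
    exact hnotsame (htrans hyK (hsymm hyL))
  obtain ⟨U, V, hUo, hVo, hKU, hLV, hUV⟩ :=
    SeparatedNhds.of_isCompact_isCompact (hcompact a) (hcompact b) hdisj
  set U' := (Quot.mk (SameMap n d) ⁻¹' (Quot.mk (SameMap n d) '' Uᶜ))ᶜ with hU'def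
  set V' := (Quot.mk (SameMap n d) ⁻¹' (Quot.mk (SameMap n d) '' Vᶜ))ᶜ with hV'def
  have haU' : a ∈ U' := by
    intro hmem
    obtain ⟨y, hyUc, hya⟩ := (hsatmem _ a).1 hmem
    exact hyUc (hKU (hsymm hya))
  have hbV' : b ∈ V' := by
    intro hmem
    obtain ⟨y, hyVc, hyb⟩ := (hsatmem _ b).1 hmem
    exact hyVc (hLV (hsymm hyb))
  have hU'open : IsOpen U' :=
    (IsClosed.preimage continuous_quot_mk (hclosed _ hUo.isClosed_compl)).isOpen_compl
  have hV'open : IsOpen V' :=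
    (IsClosed.preimage continuous_quot_mk (hclosed _ hVo.isClosed_compl)).isOpen_compl
  have hsatU' : Quot.mk (SameMap n d) ⁻¹' (Quot.mk (SameMap n d) '' U') = U' := by
    ext w
    rw [hsatmem]
    constructor
    · rintro ⟨y, hyU', hyw⟩
      intro hmem
      obtain ⟨z, hzUc, hzw⟩ := (hsatmem _ w).1 hmem
      exact hyU' ((hsatmem _ y).2 ⟨z, hzUc, htrans hzw (hsymm hyw)⟩)
    · intro hw
      exact ⟨w, hw, hrefl w⟩
  have hsatV' : Quot.mk (SameMap n d) ⁻¹' (Quot.mk (SameMap n d) '' V') = V' := by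
    ext w
    rw [hsatmem]
    constructor
    · rintro ⟨y, hyV', hyw⟩
      intro hmem
      obtain ⟨z, hzVc, hzw⟩ := (hsatmem _ w).1 hmem
      exact hyV' ((hsatmem _ y).2 ⟨z, hzVc, htrans hzw (hsymm hyw)⟩)
    · intro hw
      exact ⟨w, hw, hrefl w⟩
  refine ⟨Quot.mk (SameMap n d) '' U', Quot.mk (SameMap n d) '' V', ?_, ?_,
    ⟨a, haU', rfl⟩, ⟨b, hbV', rfl⟩, ?_⟩
  · rw [isOpen_coinduced (f := Quot.mk (SameMap n d))]
    rw [show Quot.mk (SameMap n d) ⁻¹' (Quot.mk (SameMap n d) '' U') = U' from hsatU']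
    exact hU'open
  · rw [isOpen_coinduced (f := Quot.mk (SameMap n d))]
    rw [show Quot.mk (SameMap n d) ⁻¹' (Quot.mk (SameMap n d) '' V') = V' from hsatV']
    exact hV'open
  · rw [Set.disjoint_left]
    rintro q ⟨w1, hw1, hq1⟩ ⟨w2, hw2, hq2⟩
    have hsw : SameMap n d w1 w2 := hmk.1 (hq1.trans hq2.symm)
    have hw2U : w2 ∈ U := by
      by_contra hcon
      exact hw1 ((hsatmem _ w1).2 ⟨w2, hcon, hsymm hsw⟩)
    have hw2V : w2 ∈ V := by
      by_contra hcon
      exact hw2 ((hsatmem _ w2).2 ⟨w2, hcon, hrefl w2⟩)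
    exact (Set.disjoint_left.1 hUV hw2U) hw2V
end

section
/- Fix integers n ≥ 2 and d ≥ 1, and let H_d ⊆ ℙ(V_d), H_{d+1} ⊆ ℙ(V_{d+1}), the relations ≈ on H_d and on H_{d+1}, and the Euclidean topology be as in the context. The map sending a birational tuple f = (f_0, …, f_n) of degree d to the tuple (x_0·f_0, …, x_0·f_n) of degree d+1 sends birational tuples to birational tuples, induces a continuous map H_d → H_{d+1}, and descends to a map ι_d : H_d/≈ → H_{d+1}/≈ between the quotient spaces (each with the quotient topology) which is injective, continuous, closed, and a homeomorphism onto its image; in particular its image is closed in H_{d+1}/≈. -/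
open MvPolynomial

/-- The map `(f_0, …, f_n) ↦ (x_0·f_0, …, x_0·f_n)` from degree-`d` tuples to
degree-`(d+1)` tuples. -/
noncomputable def liftTuple (n : ℕ) (f : Tuple n) : Tuple n :=
  fun i => MvPolynomial.X 0 * f i

namespace CremonaAux

abbrev MvP (n : ℕ) := MvPolynomial (Fin (n + 1)) ℂ

/-! ### Topology basics -/

lemma continuous_coeff {n : ℕ} (m : Fin (n + 1) →₀ ℕ) :
    Continuous fun p : MvP n => coeff m p :=
  (continuous_apply m).comp continuous_induced_dom

lemma continuous_into_poly {n : ℕ} {X : Type*} [TopologicalSpace X] {φ : X → MvP n}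
    (h : ∀ m, Continuous fun x => coeff m (φ x)) : Continuous φ :=
  continuous_induced_rng.2 (continuous_pi h)

lemma isEmbedding_coeffs (n : ℕ) :
    Topology.IsEmbedding (fun (p : MvP n) (s : Fin (n + 1) →₀ ℕ) => coeff s p) :=
  ⟨⟨rfl⟩, fun p q h => MvPolynomial.ext p q fun m => congrFun h m⟩

instance (n : ℕ) : T2Space (MvP n) := (isEmbedding_coeffs n).t2Space

lemma continuous_poly_mul {n : ℕ} : Continuous fun p : MvP n × MvP n => p.1 * p.2 := by
  apply continuous_into_poly
  intro m
  simp only [coeff_mul]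
  exact continuous_finset_sum _ fun x _ =>
    ((continuous_coeff x.1).comp continuous_fst).mul ((continuous_coeff x.2).comp continuous_snd)

instance (n : ℕ) : ContinuousMul (MvP n) := ⟨continuous_poly_mul⟩

lemma continuous_poly_smul {n : ℕ} (c : ℂ) : Continuous fun p : MvP n => c • p :=
  continuous_into_poly fun m => by
    simp only [coeff_smul, smul_eq_mul]
    exact continuous_const.mul (continuous_coeff m)

lemma continuous_tuple_smul {n : ℕ} (c : ℂ) : Continuous fun f : Tuple n => c • f :=
  continuous_pi fun i => (continuous_poly_smul c).comp (continuous_apply i)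

end CremonaAux
namespace CremonaAux

/-! ### Cross relations -/

def CrossRel {n : ℕ} (f g : Tuple n) : Prop := ∀ i j, f i * g j = f j * g i

lemma crossRel_smul_left {n : ℕ} {c : ℂ} (hc : c ≠ 0) {f g : Tuple n}
    (h : CrossRel (c • f) g) : CrossRel f g := fun i j => by
  have h1 := h i j
  simp only [Pi.smul_apply, smul_mul_assoc] at h1
  have h2 := congrArg (fun p => c⁻¹ • p) h1
  simpa [smul_smul, inv_mul_cancel₀ hc] using h2

lemma crossRel_smul_right {n : ℕ} {c : ℂ} (hc : c ≠ 0) {f g : Tuple n}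
    (h : CrossRel f (c • g)) : CrossRel f g := fun i j => by
  have h1 := h i j
  simp only [Pi.smul_apply, mul_smul_comm] at h1
  have h2 := congrArg (fun p => c⁻¹ • p) h1
  simpa [smul_smul, inv_mul_cancel₀ hc] using h2

lemma crossRel_smul_right' {n : ℕ} (c : ℂ) {f g : Tuple n}
    (h : CrossRel f g) : CrossRel f (c • g) := fun i j => by
  have h1 := h i j
  simp only [Pi.smul_apply, mul_smul_comm]
  rw [h1]

lemma crossRel_lift {n : ℕ} {f g : Tuple n} (h : CrossRel f g) :
    CrossRel (liftTuple n f) (liftTuple n g) := fun i j => by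
  show (X 0 * f i) * (X 0 * g j) = (X 0 * f j) * (X 0 * g i)
  linear_combination (X (0 : Fin (n+1)) * X 0 : MvP n) * h i j

lemma crossRel_lift_left {n : ℕ} {f g : Tuple n} (h : CrossRel f g) :
    CrossRel (liftTuple n f) g := fun i j => by
  show (X 0 * f i) * g j = (X 0 * f j) * g i
  linear_combination (X (0 : Fin (n+1)) : MvP n) * h i j

lemma crossRel_unlift_left {n : ℕ} {f g : Tuple n} (h : CrossRel (liftTuple n f) g) :
    CrossRel f g := fun i j => by
  have h1 : X 0 * (f i * g j) = X 0 * (f j * g i) := by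
    have h2 : (X 0 * f i) * g j = (X 0 * f j) * g i := h i j
    linear_combination h2
  exact mul_left_cancel₀ (X_ne_zero 0) h1

lemma crossRel_unlift_right {n : ℕ} {f g : Tuple n} (h : CrossRel f (liftTuple n g)) :
    CrossRel f g := fun i j => by
  have h1 : X 0 * (f i * g j) = X 0 * (f j * g i) := by
    have h2 : f i * (X 0 * g j) = f j * (X 0 * g i) := h i j
    linear_combination h2
  exact mul_left_cancel₀ (X_ne_zero 0) h1

lemma crossRel_unlift {n : ℕ} {f g : Tuple n}
    (h : CrossRel (liftTuple n f) (liftTuple n g)) : CrossRel f g :=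
  crossRel_unlift_right (crossRel_unlift_left h)

lemma crossRel_trans {n : ℕ} {F G H : Tuple n} (hG : G ≠ 0)
    (h1 : CrossRel F G) (h2 : CrossRel G H) : CrossRel F H := by
  obtain ⟨k, hk⟩ := Function.ne_iff.1 hG
  intro i j
  apply mul_left_cancel₀ hk
  linear_combination H j * h1 i k + F k * h2 i j + H i * h1 k j

end CremonaAux
namespace CremonaAux

/-! ### Algebra: homogeneous evaluation and birationality -/

lemma aeval_mul_left {n e : ℕ} (c : MvP n) (f : Tuple n) {P : MvP n}
    (hP : P.IsHomogeneous e) :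
    aeval (fun j => c * f j) P = c ^ e * aeval f P := by
  rw [aeval_def, aeval_def, eval₂_eq, eval₂_eq, Finset.mul_sum]
  apply Finset.sum_congr rfl
  intro m hm
  have hdeg : ∑ i ∈ m.support, m i = e := by
    have h1 : Finsupp.degree m = e := by
      rw [Finsupp.degree_eq_weight_one]
      exact hP (mem_support_iff.1 hm)
    simpa [Finsupp.degree_apply] using h1
  have hprod : (∏ i ∈ m.support, (c * f i) ^ m i)
      = c ^ e * ∏ i ∈ m.support, f i ^ m i := by
    rw [← hdeg, ← Finset.prod_pow_eq_pow_sum]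
    rw [← Finset.prod_mul_distrib]
    exact Finset.prod_congr rfl fun i _ => mul_pow _ _ _
  rw [hprod]
  ring

lemma isBirational_lift {n d : ℕ} (hd : 1 ≤ d) {f : Tuple n} (hf : IsBirational n d f) :
    IsBirational n (d + 1) (liftTuple n f) := by
  obtain ⟨e, he, g, hg, a, ha0, hah, heq⟩ := hf
  refine ⟨e, he, g, hg, X 0 ^ e * a,
    mul_ne_zero (pow_ne_zero _ (X_ne_zero 0)) ha0, ?_, ?_⟩
  · have h1 := (isHomogeneous_X_pow (0 : Fin (n+1)) e (R := ℂ)).mul hah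
    have h2 : 1 ≤ d * e := Nat.one_le_iff_ne_zero.2 (Nat.mul_ne_zero (by omega) (by omega))
    have h3 : (d + 1) * e = d * e + e := by ring
    have h4 : e + (d * e - 1) = (d + 1) * e - 1 := by omega
    rwa [h4] at h1
  · intro i
    have h5 : aeval (liftTuple n f) (g i) = X 0 ^ e * aeval f (g i) :=
      aeval_mul_left (X 0) f (hg i)
    rw [h5, heq i]
    ring

lemma exists_mul_X_eq {n : ℕ} {u v : MvP n} {i j : Fin (n + 1)} (hij : i ≠ j)
    (h : u * X j = v * X i) : ∃ b, u = b * X i := by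
  have hdvd : X i ∣ u := by
    rw [X_dvd_iff_modMonomial_eq_zero]
    apply MvPolynomial.ext
    intro m
    rw [coeff_zero]
    by_cases hle : Finsupp.single i 1 ≤ m
    · exact coeff_modMonomial_of_le _ hle
    · rw [coeff_modMonomial_of_not_le _ hle]
      have hmi : m i = 0 := by
        by_contra hne
        exact hle (Finsupp.single_le_iff.2 (Nat.one_le_iff_ne_zero.2 hne))
      have h1 := congrArg (coeff (m + Finsupp.single j 1)) h
      rw [coeff_mul_X] at h1
      rw [h1, coeff_mul_X']
      rw [if_neg]
      simp only [Finsupp.mem_support_iff, Finsupp.add_apply, Finsupp.single_apply,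
        if_neg (Ne.symm hij)]
      omega
  obtain ⟨b, hb⟩ := hdvd
  exact ⟨b, by rw [hb]; ring⟩

lemma isHomogeneous_of_mul_X {n : ℕ} {b : MvP n} {s : Fin (n + 1)} {D : ℕ}
    (h : (b * X s).IsHomogeneous D) : b.IsHomogeneous (D - 1) := by
  intro m hm
  have h2 : coeff (m + Finsupp.single s 1) (b * X s) ≠ 0 := by rwa [coeff_mul_X]
  have h3 := h h2
  rw [map_add] at h3
  have h4 : (Finsupp.weight (1 : Fin (n+1) → ℕ)) (Finsupp.single s 1) = 1 := by
    simp [Finsupp.weight_apply, Finsupp.sum_single_index]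
  omega

lemma birational_of_crossRel {n d : ℕ} (hn1 : 1 ≤ n) {f g : Tuple n} {dg : ℕ}
    (hf : IsHomTuple n d f) (hf0 : f ≠ 0) (hg0 : g ≠ 0)
    (hgbir : IsBirational n dg g) (hrel : CrossRel f g) : IsBirational n d f := by
  obtain ⟨i0, hfi0'⟩ := Function.ne_iff.1 hf0
  have hfi0 : f i0 ≠ 0 := by simpa using hfi0'
  have hgi0 : g i0 ≠ 0 := by
    obtain ⟨j0, hgj0⟩ := Function.ne_iff.1 hg0
    intro h0
    have hgj0' : g j0 ≠ 0 := by simpa using hgj0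
    have h1 := hrel i0 j0
    rw [h0, mul_zero] at h1
    rcases mul_eq_zero.1 h1 with h | h
    · exact hfi0 h
    · exact hgj0' h
  obtain ⟨e, he, g', hg', a, ha0, hah, heq⟩ := hgbir
  set u : Tuple n := fun i => aeval f (g' i) with hu
  have key : ∀ i, (g i0) ^ e * u i = (f i0) ^ e * (a * X i) := by
    intro i
    have h1 : aeval (fun j => g i0 * f j) (g' i) = (g i0) ^ e * u i :=
      aeval_mul_left (g i0) f (hg' i)
    have h2 : aeval (fun j => f i0 * g j) (g' i) = (f i0) ^ e * aeval g (g' i) :=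
      aeval_mul_left (f i0) g (hg' i)
    have h3 : (fun j => g i0 * f j) = fun j => f i0 * g j := by
      funext j
      rw [mul_comm]
      exact hrel j i0
    rw [← h1, h3, h2, heq i]
  have hA : (g i0) ^ e ≠ 0 := pow_ne_zero _ hgi0
  have hB : (f i0) ^ e ≠ 0 := pow_ne_zero _ hfi0
  have hu0 : ∀ i, u i ≠ 0 := by
    intro i hi
    have h1 := key i
    rw [hi, mul_zero] at h1
    exact (mul_ne_zero hB (mul_ne_zero ha0 (X_ne_zero i))) h1.symm
  have hcross : ∀ i j, u i * X j = u j * X i := by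
    intro i j
    apply mul_left_cancel₀ hA
    calc (g i0) ^ e * (u i * X j) = ((g i0) ^ e * u i) * X j := by ring
    _ = ((f i0) ^ e * (a * X i)) * X j := by rw [key i]
    _ = ((f i0) ^ e * (a * X j)) * X i := by ring
    _ = ((g i0) ^ e * u j) * X i := by rw [key j]
    _ = (g i0) ^ e * (u j * X i) := by ring
  -- extract common factor b with u i = b * X i
  have hx0 : ∃ b, u 0 = b * X 0 := by
    have hne : (0 : Fin (n+1)) ≠ ⟨1, by omega⟩ := by
      intro h01
      exact absurd (congrArg Fin.val h01) (by simp)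
    exact exists_mul_X_eq hne (hcross 0 ⟨1, by omega⟩)
  obtain ⟨b, hb⟩ := hx0
  have hball : ∀ i, u i = b * X i := by
    intro i
    have h1 := hcross i 0
    rw [hb] at h1
    have h2 : u i * X 0 = (b * X i) * X 0 := by rw [h1]; ring
    exact mul_right_cancel₀ (X_ne_zero 0) h2
  have hb0 : b ≠ 0 := by
    intro h0
    apply hu0 0
    rw [hb, h0, zero_mul]
  have hbhom : b.IsHomogeneous (d * e - 1) := by
    have h1 : (u 0).IsHomogeneous (d * e) := (hg' 0).aeval f hf
    rw [hball 0] at h1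
    exact isHomogeneous_of_mul_X h1
  exact ⟨e, he, g', hg', b, hb0, hbhom, hball⟩

end CremonaAux
namespace CremonaAux

/-! ### Scalar relation, projectivization -/

lemma scalarRel_equiv (n d : ℕ) : Equivalence (ScalarRel n d) where
  refl F := ⟨1, one_ne_zero, (one_smul ℂ _).symm⟩
  symm := by
    rintro F G ⟨c, hc, h⟩
    exact ⟨c⁻¹, inv_ne_zero hc, by rw [h, smul_smul, inv_mul_cancel₀ hc, one_smul]⟩
  trans := by
    rintro F G H ⟨c, hc, h⟩ ⟨c', hc', h'⟩
    exact ⟨c' * c, mul_ne_zero hc' hc, by rw [h', h, smul_smul]⟩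

lemma scalarRel_of_mk_eq {n d : ℕ} {F G : NzHomTuple n d}
    (h : Quot.mk (ScalarRel n d) F = Quot.mk (ScalarRel n d) G) : ScalarRel n d F G :=
  ((scalarRel_equiv n d).eqvGen_iff).1 (Quot.eq.1 h)

lemma isHomTuple_smul {n d : ℕ} (c : ℂ) {f : Tuple n} (hf : IsHomTuple n d f) :
    IsHomTuple n d (c • f) := fun i =>
  (homogeneousSubmodule (Fin (n+1)) ℂ d).smul_mem c (hf i)

noncomputable def smulNz {n d : ℕ} (c : ℂˣ) (F : NzHomTuple n d) : NzHomTuple n d :=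
  ⟨(c : ℂ) • F.1, isHomTuple_smul _ F.2.1, by
    intro h0
    apply F.2.2
    have h1 := congrArg (fun f => ((c : ℂ))⁻¹ • f) h0
    simpa [smul_smul, inv_mul_cancel₀ c.ne_zero] using h1⟩

lemma continuous_smulNz {n d : ℕ} (c : ℂˣ) : Continuous (smulNz (n := n) (d := d) c) :=
  (((continuous_tuple_smul (c : ℂ)).comp continuous_subtype_val)).subtype_mk _

lemma isOpenMap_mk (n d : ℕ) : IsOpenMap (Quot.mk (ScalarRel n d)) := by
  intro U hU
  rw [← isQuotientMap_quot_mk.isOpen_preimage]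
  have heq : Quot.mk (ScalarRel n d) ⁻¹' (Quot.mk (ScalarRel n d) '' U)
      = ⋃ c : ℂˣ, smulNz c ⁻¹' U := by
    ext G
    simp only [Set.mem_preimage, Set.mem_image, Set.mem_iUnion]
    constructor
    · rintro ⟨F, hFU, hmk⟩
      obtain ⟨c, hc, hG⟩ := scalarRel_of_mk_eq hmk
      refine ⟨(Units.mk0 c hc)⁻¹, ?_⟩
      have heq2 : smulNz (Units.mk0 c hc)⁻¹ G = F := by
        apply Subtype.ext
        show ((Units.mk0 c hc)⁻¹ : ℂˣ).val • G.1 = F.1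
        rw [Units.val_inv_eq_inv_val, Units.val_mk0, hG, smul_smul,
          inv_mul_cancel₀ hc, one_smul]
      rw [heq2]; exact hFU
    · rintro ⟨c, hc⟩
      refine ⟨smulNz c G, hc, Quot.sound ?_⟩
      exact ⟨(c : ℂ)⁻¹, inv_ne_zero c.ne_zero, by
        show G.1 = (c : ℂ)⁻¹ • ((c : ℂ) • G.1)
        rw [smul_smul, inv_mul_cancel₀ c.ne_zero, one_smul]⟩
  rw [heq]
  exact isOpen_iUnion fun c => (continuous_smulNz c).isOpen_preimage U hU

end CremonaAux
namespace CremonaAux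

/-! ### The lift map on tuples and quotients -/

lemma isHomTuple_lift {n d : ℕ} {f : Tuple n} (hf : IsHomTuple n d f) :
    IsHomTuple n (d + 1) (liftTuple n f) := fun i => by
  have h := (isHomogeneous_X ℂ (0 : Fin (n + 1))).mul (hf i)
  show (X 0 * f i).IsHomogeneous (d + 1)
  have h2 : 1 + d = d + 1 := Nat.add_comm 1 d
  rw [← h2]
  exact h

lemma lift_ne_zero {n : ℕ} {f : Tuple n} (hf : f ≠ 0) : liftTuple n f ≠ 0 := by
  obtain ⟨i, hi⟩ := Function.ne_iff.1 hf
  have hi' : f i ≠ 0 := by simpa using hi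
  refine Function.ne_iff.2 ⟨i, ?_⟩
  have h3 : X 0 * f i ≠ 0 := mul_ne_zero (X_ne_zero (0 : Fin (n+1))) hi'
  exact h3

noncomputable def liftNz {n : ℕ} (d : ℕ) (F : NzHomTuple n d) : NzHomTuple n (d + 1) :=
  ⟨liftTuple n F.1, isHomTuple_lift F.2.1, lift_ne_zero F.2.2⟩

lemma liftNz_scalar {n d : ℕ} {F G : NzHomTuple n d} (h : ScalarRel n d F G) :
    ScalarRel n (d + 1) (liftNz d F) (liftNz d G) := by
  obtain ⟨c, hc, hG⟩ := h
  refine ⟨c, hc, ?_⟩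
  show liftTuple n G.1 = c • liftTuple n F.1
  funext i
  show X 0 * G.1 i = c • (X 0 * F.1 i)
  rw [hG]
  show X 0 * (c • F.1 i) = c • (X 0 * F.1 i)
  rw [mul_smul_comm]

lemma continuous_liftNz {n d : ℕ} : Continuous (liftNz (n := n) d) := by
  apply Continuous.subtype_mk
  apply continuous_pi
  intro i
  show Continuous fun F : NzHomTuple n d => X 0 * F.1 i
  exact Continuous.comp (g := fun p : MvP n × MvP n => p.1 * p.2)
    (f := fun F : NzHomTuple n d => ((X 0 : MvP n), F.1 i)) continuous_poly_mul
    (continuous_const.prodMk ((continuous_apply i).comp continuous_subtype_val))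

noncomputable def Jmap (n d : ℕ) : ProjV n d → ProjV n (d + 1) :=
  Quot.lift (fun F => Quot.mk (ScalarRel n (d + 1)) (liftNz d F))
    (fun _ _ h => Quot.sound (liftNz_scalar h))

lemma continuous_Jmap (n d : ℕ) : Continuous (Jmap n d) :=
  continuous_quot_lift _ (continuous_quot_mk.comp continuous_liftNz)

noncomputable def jhat (n d : ℕ) (hd : 1 ≤ d) : Hd n d → Hd n (d + 1) := fun x =>
  ⟨Jmap n d x.1, by
    obtain ⟨F, hFb, hF⟩ := x.2
    exact ⟨liftNz d F, isBirational_lift hd hFb, by rw [← hF]; rfl⟩⟩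

lemma continuous_jhat (n d : ℕ) (hd : 1 ≤ d) : Continuous (jhat n d hd) :=
  ((continuous_Jmap n d).comp continuous_subtype_val).subtype_mk _

lemma jhat_val {n d : ℕ} (hd : 1 ≤ d) (x : Hd n d) (F : NzHomTuple n d)
    (h : Quot.mk (ScalarRel n d) F = x.1) :
    (jhat n d hd x).1 = Quot.mk (ScalarRel n (d + 1)) (liftNz d F) := by
  show Jmap n d x.1 = _
  rw [← h]
  rfl

/-! ### SameMap is an equivalence relation -/

lemma sameMap_equiv (n d : ℕ) : Equivalence (SameMap n d) where
  refl x := by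
    obtain ⟨F, _, hF⟩ := x.2
    exact ⟨F, F, hF, hF, fun i j => mul_comm _ _⟩
  symm := by
    rintro x y ⟨F, G, hF, hG, h⟩
    exact ⟨G, F, hG, hF, fun i j => by linear_combination -(h i j)⟩
  trans := by
    rintro x y z ⟨F, G, hF, hG, h1⟩ ⟨G', H, hG', hH, h2⟩
    obtain ⟨c, hc, hGG⟩ := scalarRel_of_mk_eq (hG.trans hG'.symm)
    have h2' : CrossRel G.1 H.1 := by
      have h2'' : CrossRel (c • G.1) H.1 := by
        intro i j
        have := h2 i j
        rw [hGG] at this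
        exact this
      exact crossRel_smul_left hc h2''
    exact ⟨F, H, hF, hH, crossRel_trans G.2.2 h1 h2'⟩

lemma sameMap_of_mk_eq {n d : ℕ} {x y : Hd n d}
    (h : Quot.mk (SameMap n d) x = Quot.mk (SameMap n d) y) : SameMap n d x y :=
  ((sameMap_equiv n d).eqvGen_iff).1 (Quot.eq.1 h)

end CremonaAux
namespace CremonaAux

/-! ### Compactness of the normalized tuples -/

def Mon (n d : ℕ) := {m : Fin (n + 1) →₀ ℕ // Finsupp.degree m = d}

noncomputable instance (n d : ℕ) : Fintype (Mon n d) :=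
  Fintype.ofInjective
    (fun m (i : Fin (n + 1)) =>
      (⟨m.1 i, Nat.lt_succ_of_le (le_trans (Finsupp.le_degree i m.1) (le_of_eq m.2))⟩ :
        Fin (d + 1)))
    (fun m m' h => Subtype.ext (Finsupp.ext fun i => congrArg Fin.val (congrFun h i)))

noncomputable def coeffMap (n d : ℕ) (f : Tuple n) : Fin (n + 1) × Mon n d → ℂ :=
  fun p => coeff p.2.1 (f p.1)

lemma continuous_coeffMap (n d : ℕ) : Continuous (coeffMap n d) :=
  continuous_pi fun p => (continuous_coeff p.2.1).comp (continuous_apply p.1)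

lemma coeffMap_smul (n d : ℕ) (c : ℂ) (f : Tuple n) :
    coeffMap n d (c • f) = c • coeffMap n d f := by
  funext p
  show coeff p.2.1 (c • f p.1) = c • coeff p.2.1 (f p.1)
  rw [coeff_smul]

noncomputable def psi (n d : ℕ) (v : Fin (n + 1) × Mon n d → ℂ) : Tuple n :=
  fun i => ∑ m : Mon n d, monomial m.1 (v (i, m))

lemma coeff_psi (n d : ℕ) (v : Fin (n + 1) × Mon n d → ℂ) (i : Fin (n + 1))
    (m' : Fin (n + 1) →₀ ℕ) :
    coeff m' (psi n d v i) =
      if h : Finsupp.degree m' = d then v (i, ⟨m', h⟩) else 0 := by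
  classical
  rw [psi, coeff_sum]
  by_cases h : Finsupp.degree m' = d
  · rw [dif_pos h]
    have hterm : ∀ m : Mon n d,
        coeff m' (monomial m.1 (v (i, m))) = if m = ⟨m', h⟩ then v (i, m) else 0 := by
      intro m
      rw [coeff_monomial]
      by_cases hm : m = (⟨m', h⟩ : Mon n d)
      · rw [if_pos hm, if_pos (congrArg Subtype.val hm)]
      · rw [if_neg (fun he => hm (Subtype.ext he)), if_neg hm]
    rw [Finset.sum_congr rfl fun m _ => hterm m]
    exact (Fintype.sum_ite_eq' _ _)
  · rw [dif_neg h]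
    apply Finset.sum_eq_zero
    intro m _
    rw [coeff_monomial, if_neg]
    intro he
    exact h (he ▸ m.2)

lemma psi_isHom (n d : ℕ) (v : Fin (n + 1) × Mon n d → ℂ) : IsHomTuple n d (psi n d v) :=
  fun i => IsHomogeneous.sum _ _ _ fun m _ => isHomogeneous_monomial _ m.2

lemma psi_coeffMap (n d : ℕ) {f : Tuple n} (hf : IsHomTuple n d f) :
    psi n d (coeffMap n d f) = f := by
  funext i
  apply MvPolynomial.ext
  intro m'
  rw [coeff_psi]
  split_ifs with h
  · rfl
  · exact ((hf i).coeff_eq_zero h).symm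

lemma coeffMap_psi (n d : ℕ) (v : Fin (n + 1) × Mon n d → ℂ) :
    coeffMap n d (psi n d v) = v := by
  funext p
  show coeff p.2.1 (psi n d v p.1) = v p
  rw [coeff_psi, dif_pos p.2.2]
  rfl

lemma continuous_psi (n d : ℕ) : Continuous (psi n d) := by
  apply continuous_pi
  intro i
  apply continuous_into_poly
  intro m'
  have hrw : (fun v : Fin (n + 1) × Mon n d → ℂ => coeff m' (psi n d v i))
      = fun v => if h : Finsupp.degree m' = d then v (i, ⟨m', h⟩) else 0 := by
    funext v; rw [coeff_psi]
  rw [hrw]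
  by_cases h : Finsupp.degree m' = d
  · simp only [dif_pos h]
    exact continuous_apply _
  · simp only [dif_neg h]
    exact continuous_const

def SigmaSet (n d : ℕ) : Set (NzHomTuple n d) := {F | ‖coeffMap n d F.1‖ = 1}

lemma isCompact_sigmaSet (n d : ℕ) : IsCompact (SigmaSet n d) := by
  rw [Subtype.isCompact_iff]
  have himg : Subtype.val '' SigmaSet n d = psi n d '' Metric.sphere 0 1 := by
    ext f
    constructor
    · rintro ⟨F, hF, rfl⟩
      refine ⟨coeffMap n d F.1, ?_, psi_coeffMap n d F.2.1⟩
      exact mem_sphere_zero_iff_norm.2 hF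
    · rintro ⟨v, hv, rfl⟩
      have hv1 : ‖v‖ = 1 := by simpa [Metric.mem_sphere, dist_zero_right] using hv
      have hv0 : v ≠ 0 := by
        intro h0; rw [h0, norm_zero] at hv1; exact one_ne_zero hv1.symm
      have hnz : psi n d v ≠ 0 := by
        intro h0
        apply hv0
        rw [← coeffMap_psi n d v, h0]
        funext p
        exact coeff_zero _
      refine ⟨⟨psi n d v, psi_isHom n d v, hnz⟩, ?_, rfl⟩
      show ‖coeffMap n d (psi n d v)‖ = 1
      rw [coeffMap_psi n d v]
      exact hv1
  rw [himg]
  exact (isCompact_sphere 0 1).image (continuous_psi n d)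

lemma exists_sigma_rep {n d : ℕ} (F : NzHomTuple n d) :
    ∃ G ∈ SigmaSet n d, ScalarRel n d F G := by
  set v := coeffMap n d F.1 with hv
  have hvne : v ≠ 0 := by
    obtain ⟨i, hi⟩ := Function.ne_iff.1 F.2.2
    have hi' : F.1 i ≠ 0 := hi
    obtain ⟨m, hm⟩ := ne_zero_iff.1 hi'
    have hdeg : Finsupp.degree m = d := by
      by_contra h
      exact hm ((F.2.1 i).coeff_eq_zero h)
    intro h0
    apply hm
    have := congrFun h0 (i, (⟨m, hdeg⟩ : Mon n d))
    exact this
  have hnv : ‖v‖ ≠ 0 := norm_ne_zero_iff.2 hvne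
  set c : ℂ := ((‖v‖⁻¹ : ℝ) : ℂ) with hc
  have hc0 : c ≠ 0 := by
    simp only [hc, ne_eq, Complex.ofReal_eq_zero]
    exact inv_ne_zero hnv
  refine ⟨⟨c • F.1, isHomTuple_smul c F.2.1, ?_⟩, ?_, ⟨c, hc0, rfl⟩⟩
  · intro h0
    apply F.2.2
    have h1 := congrArg (fun f => c⁻¹ • f) h0
    simpa [smul_smul, inv_mul_cancel₀ hc0] using h1
  · show ‖coeffMap n d (c • F.1)‖ = 1
    rw [coeffMap_smul, norm_smul, ← hv]
    rw [hc]
    rw [Complex.norm_real]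
    rw [Real.norm_eq_abs, abs_of_nonneg (by positivity)]
    exact inv_mul_cancel₀ hnv

end CremonaAux
namespace CremonaAux

/-! ### Closedness machinery -/

lemma isClosed_crossRelSet (n d d₂ : ℕ) :
    IsClosed {q : NzHomTuple n d × NzHomTuple n d₂ | CrossRel q.1.1 q.2.1} := by
  have heq : {q : NzHomTuple n d × NzHomTuple n d₂ | CrossRel q.1.1 q.2.1}
      = ⋂ i, ⋂ j, {q : NzHomTuple n d × NzHomTuple n d₂ |
          q.1.1 i * q.2.1 j = q.1.1 j * q.2.1 i} := by
    ext q
    simp only [Set.mem_setOf_eq, Set.mem_iInter]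
    exact Iff.rfl
  rw [heq]
  refine isClosed_iInter fun i => isClosed_iInter fun j => isClosed_eq ?_ ?_
  · exact (((continuous_apply i).comp (continuous_subtype_val.comp continuous_fst)).mul
      ((continuous_apply j).comp (continuous_subtype_val.comp continuous_snd)))
  · exact (((continuous_apply j).comp (continuous_subtype_val.comp continuous_fst)).mul
      ((continuous_apply i).comp (continuous_subtype_val.comp continuous_snd)))

lemma isClosed_rbar (n d d₂ : ℕ) :
    IsClosed {p : NzHomTuple n d × ProjV n d₂ |
      ∀ G, Quot.mk (ScalarRel n d₂) G = p.2 → CrossRel p.1.1 G.1} := by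
  rw [← isOpen_compl_iff]
  have heq : {p : NzHomTuple n d × ProjV n d₂ |
      ∀ G, Quot.mk (ScalarRel n d₂) G = p.2 → CrossRel p.1.1 G.1}ᶜ
      = (Prod.map id (Quot.mk (ScalarRel n d₂))) ''
        {q : NzHomTuple n d × NzHomTuple n d₂ | CrossRel q.1.1 q.2.1}ᶜ := by
    ext ⟨F, y⟩
    simp only [Set.mem_compl_iff, Set.mem_setOf_eq, not_forall, Classical.not_imp,
      Set.mem_image]
    constructor
    · rintro ⟨G, hmk, hnc⟩
      exact ⟨(F, G), hnc, by simp [Prod.map, hmk]⟩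
    · rintro ⟨⟨F', G⟩, hnc, heq2⟩
      have h1 : F' = F := congrArg Prod.fst heq2
      have h2 : Quot.mk (ScalarRel n d₂) G = y := congrArg Prod.snd heq2
      exact ⟨G, h2, by rw [← h1]; exact hnc⟩
  rw [heq]
  exact (IsOpenMap.id.prodMap (isOpenMap_mk n d₂)) _
    (isClosed_crossRelSet n d d₂).isOpen_compl

end CremonaAux
open CremonaAux

/-- For `n ≥ 2`, `d ≥ 1`, the map `f ↦ (x_0·f_0, …, x_0·f_n)` sends `V_d ∖ {0}` to
`V_{d+1} ∖ {0}` and birational tuples to birational tuples, induces a continuous map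
`H_d → H_{d+1}`, and descends to a map `ι_d : H_d/≈ → H_{d+1}/≈` which is injective,
continuous, closed, and a homeomorphism onto its image, whose image is closed. -/
theorem liftTuple_descends_closed_embedding (n d : ℕ) (hn : 2 ≤ n) (hd : 1 ≤ d) :
    (∀ f : Tuple n, IsHomTuple n d f → IsHomTuple n (d + 1) (liftTuple n f)) ∧
    (∀ f : Tuple n, f ≠ 0 → liftTuple n f ≠ 0) ∧
    (∀ f : Tuple n, IsBirational n d f → IsBirational n (d + 1) (liftTuple n f)) ∧
    ∃ jhat : Hd n d → Hd n (d + 1),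
      Continuous jhat ∧
      (∀ (F : NzHomTuple n d) (G : NzHomTuple n (d + 1)),
        (G : Tuple n) = liftTuple n (F : Tuple n) →
        ∀ x : Hd n d, (x : ProjV n d) = Quot.mk (ScalarRel n d) F →
          ((jhat x : ProjV n (d + 1)) = Quot.mk (ScalarRel n (d + 1)) G)) ∧
      ∃ iota : Quot (SameMap n d) → Quot (SameMap n (d + 1)),
        (∀ x : Hd n d, iota (Quot.mk (SameMap n d) x) = Quot.mk (SameMap n (d + 1)) (jhat x)) ∧
        Function.Injective iota ∧
        Continuous iota ∧
        IsClosedMap iota ∧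
        Topology.IsClosedEmbedding iota ∧
        IsClosed (Set.range iota) := by
  have hn1 : 1 ≤ n := by omega
  refine ⟨fun f hf => isHomTuple_lift hf, fun f hf => lift_ne_zero hf,
    fun f hf => isBirational_lift hd hf, CremonaAux.jhat n d hd, continuous_jhat n d hd,
    ?_, ?_⟩
  · intro F G hG x hx
    rw [jhat_val hd x F hx.symm]
    have hGF : G = liftNz d F := Subtype.ext hG
    rw [hGF]
  -- the descended map
  have hresp : ∀ x y, SameMap n d x y →
      Quot.mk (SameMap n (d + 1)) (CremonaAux.jhat n d hd x)
        = Quot.mk (SameMap n (d + 1)) (CremonaAux.jhat n d hd y) := by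
    rintro x y ⟨F, G, hF, hG, h⟩
    exact Quot.sound ⟨liftNz d F, liftNz d G, (jhat_val hd x F hF).symm,
      (jhat_val hd y G hG).symm, crossRel_lift h⟩
  set iot : Quot (SameMap n d) → Quot (SameMap n (d + 1)) :=
    Quot.lift (fun x => Quot.mk (SameMap n (d + 1)) (CremonaAux.jhat n d hd x)) hresp with hiot
  have hcont : Continuous iot :=
    continuous_quot_lift _ (continuous_quot_mk.comp (continuous_jhat n d hd))
  have hinj : Function.Injective iot := by
    intro a b hab
    obtain ⟨x, rfl⟩ := Quot.exists_rep a
    obtain ⟨y, rfl⟩ := Quot.exists_rep b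
    have hab' : Quot.mk (SameMap n (d + 1)) (CremonaAux.jhat n d hd x)
        = Quot.mk (SameMap n (d + 1)) (CremonaAux.jhat n d hd y) := hab
    obtain ⟨P, Q, hP, hQ, hpq⟩ := sameMap_of_mk_eq hab'
    obtain ⟨Fx, hFxb, hFx⟩ := x.2
    obtain ⟨Fy, hFyb, hFy⟩ := y.2
    obtain ⟨c, hc, hPc⟩ := scalarRel_of_mk_eq ((hP.trans (jhat_val hd x Fx hFx)).symm)
    obtain ⟨c', hc', hQc⟩ := scalarRel_of_mk_eq ((hQ.trans (jhat_val hd y Fy hFy)).symm)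
    have h1 : CrossRel P.1 Q.1 := hpq
    rw [hPc, hQc] at h1
    have h2 : CrossRel (liftTuple n Fx.1) (liftTuple n Fy.1) :=
      crossRel_smul_right hc' (crossRel_smul_left hc h1)
    have h3 : CrossRel Fx.1 Fy.1 := crossRel_unlift h2
    exact Quot.sound ⟨Fx, Fy, hFx, hFy, h3⟩
  have hclosed : IsClosedMap iot := by
    intro C hC
    rw [← Topology.IsCoinducing.isClosed_preimage isQuotientMap_quot_mk.isCoinducing]
    have hD : IsClosed (Quot.mk (SameMap n d) ⁻¹' C) := hC.preimage continuous_quot_mk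
    obtain ⟨D'', hD''c, hD''⟩ := isClosed_induced_iff.1 hD
    haveI : CompactSpace (SigmaSet n d) :=
      isCompact_iff_compactSpace.1 (isCompact_sigmaSet n d)
    set T : Set (SigmaSet n d × Hd n (d + 1)) :=
      {p | ∀ G, Quot.mk (ScalarRel n (d + 1)) G = (p.2 : ProjV n (d + 1)) →
            CrossRel (p.1 : NzHomTuple n d).1 G.1}
        ∩ {p | Quot.mk (ScalarRel n d) (p.1 : NzHomTuple n d) ∈ D''} with hT
    have hTclosed : IsClosed T := by
      apply IsClosed.inter
      · have hφ : Continuous fun p : SigmaSet n d × Hd n (d + 1) =>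
            (((p.1 : NzHomTuple n d), (p.2 : ProjV n (d + 1))) :
              NzHomTuple n d × ProjV n (d + 1)) :=
          (continuous_subtype_val.comp continuous_fst).prodMk
            (continuous_subtype_val.comp continuous_snd)
        exact (isClosed_rbar n d (d + 1)).preimage hφ
      · exact hD''c.preimage
          (continuous_quot_mk.comp (continuous_subtype_val.comp continuous_fst))
    have himage : Quot.mk (SameMap n (d + 1)) ⁻¹' (iot '' C) = Prod.snd '' T := by
      ext Y
      constructor
      · intro hY
        obtain ⟨q, hqC, hq⟩ := hY
        obtain ⟨x, rfl⟩ := Quot.exists_rep q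
        have hq' : Quot.mk (SameMap n (d + 1)) (CremonaAux.jhat n d hd x)
            = Quot.mk (SameMap n (d + 1)) Y := hq
        obtain ⟨P, Q, hP, hQ, hpq⟩ := sameMap_of_mk_eq hq'
        obtain ⟨Fx, hFxb, hFx⟩ := x.2
        obtain ⟨F, hFS, hFscal⟩ := exists_sigma_rep Fx
        have hmkF : Quot.mk (ScalarRel n d) F = x.1 := by
          rw [← hFx]
          exact (Quot.sound hFscal).symm
        obtain ⟨c, hc, hPc⟩ := scalarRel_of_mk_eq ((hP.trans (jhat_val hd x F hmkF)).symm)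
        have h1 : CrossRel P.1 Q.1 := hpq
        rw [hPc] at h1
        have h3 : CrossRel F.1 Q.1 := crossRel_unlift_left (crossRel_smul_left hc h1)
        refine ⟨(⟨F, hFS⟩, Y), ⟨?_, ?_⟩, rfl⟩
        · intro G hG
          obtain ⟨c', hc', hGc⟩ := scalarRel_of_mk_eq (hQ.trans hG.symm)
          show CrossRel F.1 G.1
          rw [hGc]
          exact crossRel_smul_right' c' h3
        · show Quot.mk (ScalarRel n d) F ∈ D''
          have hx2 : x ∈ Subtype.val ⁻¹' D'' := by
            rw [hD'']
            exact hqC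
          rw [hmkF]
          exact hx2
      · rintro ⟨⟨⟨F, hFS⟩, Y'⟩, ⟨hrb, hFD⟩, hsnd⟩
        have hYY : Y' = Y := hsnd
        subst hYY
        obtain ⟨G₀, hG₀b, hmkG₀⟩ := Y'.2
        have hcr : CrossRel F.1 G₀.1 := hrb G₀ hmkG₀
        have hfb : IsBirational n d F.1 :=
          birational_of_crossRel hn1 F.2.1 F.2.2 G₀.2.2 hG₀b hcr
        set x : Hd n d := ⟨Quot.mk (ScalarRel n d) F, ⟨F, hfb, rfl⟩⟩ with hx
        have hxD : x ∈ Quot.mk (SameMap n d) ⁻¹' C := by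
          have : x ∈ Subtype.val ⁻¹' D'' := hFD
          rw [hD''] at this
          exact this
        refine ⟨Quot.mk (SameMap n d) x, hxD, ?_⟩
        show Quot.mk (SameMap n (d + 1)) (CremonaAux.jhat n d hd x)
            = Quot.mk (SameMap n (d + 1)) Y'
        exact Quot.sound ⟨liftNz d F, G₀, (jhat_val hd x F rfl).symm, hmkG₀,
          crossRel_lift_left hcr⟩
    rw [himage]
    exact isClosedMap_snd_of_compactSpace T hTclosed
  have hemb : Topology.IsClosedEmbedding iot :=
    Topology.IsClosedEmbedding.of_continuous_injective_isClosedMap hcont hinj hclosed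
  exact ⟨iot, fun x => rfl, hinj, hcont, hclosed, hemb, hemb.isClosed_range⟩
end
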